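/- arXiv:2103.08844 — 4 statements merged into one kernel-verified Lean document; each statement's English description precedes it below -/
import Mathlib

section
/- For every integer k ≥ 1 there exists a constant c_k > 0 such that the following holds: for every real polynomial P in two variables of total degree at most k, every μ ∈ ℝ and every δ > 0, if the set Γ := {ξ ∈ [0,1]² : μ ≤ P(ξ) ≤ μ + 1} has Lebesgue measure |Γ| > δ, then the intersection of shifts ⋂_{a ∈ {0,1,…,k}²} {ξ ∈ ℝ² : ξ + c_k δ a ∈ Γ} has Lebesgue measure strictly greater than δ/2. -/
open MeasureTheory Real Set
open scoped ENNReal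

noncomputable section

def Zset (P : MvPolynomial (Fin 2) ℝ) (μ : ℝ) : Set (Fin 2 → ℝ) :=
  {ξ ∈ Icc (0 : Fin 2 → ℝ) 1 |
    μ ≤ MvPolynomial.eval ξ P ∧ MvPolynomial.eval ξ P ≤ μ + 1}

lemma Zset_measurable (P : MvPolynomial (Fin 2) ℝ) (μ : ℝ) :
    MeasurableSet (Zset P μ) := by
  have : Zset P μ = Icc (0 : Fin 2 → ℝ) 1 ∩
      (fun ξ => MvPolynomial.eval ξ P) ⁻¹' Icc μ (μ+1) := by
    ext ξ; simp [Zset, Set.mem_Icc, Set.mem_setOf_eq, and_assoc]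
  rw [this]
  exact measurableSet_Icc.inter
    ((MvPolynomial.continuous_eval P).measurable measurableSet_Icc)

lemma eval_slice_x (P : MvPolynomial (Fin 2) ℝ) (x y : ℝ) :
    MvPolynomial.eval ![x, y] P =
      Polynomial.eval x (MvPolynomial.aeval ![Polynomial.X, Polynomial.C y] P) := by
  rw [MvPolynomial.aeval_def, MvPolynomial.polynomial_eval_eval₂]
  have h1 : (Polynomial.evalRingHom x).comp (algebraMap ℝ (Polynomial ℝ)) =
      RingHom.id ℝ := by
    ext a; simp [Polynomial.algebraMap_eq]
  have h2 : (fun s => Polynomial.eval x (![Polynomial.X, Polynomial.C y] s)) =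
      ![x, y] := by
    funext s; fin_cases s <;> simp
  rw [h1, h2]
  rfl

lemma eval_slice_y (P : MvPolynomial (Fin 2) ℝ) (x y : ℝ) :
    MvPolynomial.eval ![x, y] P =
      Polynomial.eval y (MvPolynomial.aeval ![Polynomial.C x, Polynomial.X] P) := by
  rw [MvPolynomial.aeval_def, MvPolynomial.polynomial_eval_eval₂]
  have h1 : (Polynomial.evalRingHom y).comp (algebraMap ℝ (Polynomial ℝ)) =
      RingHom.id ℝ := by
    ext a; simp [Polynomial.algebraMap_eq]
  have h2 : (fun s => Polynomial.eval y (![Polynomial.C x, Polynomial.X] s)) =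
      ![x, y] := by
    funext s; fin_cases s <;> simp
  rw [h1, h2]
  rfl

lemma mem_Icc_pair (x y : ℝ) :
    (![x, y] ∈ Icc (0 : Fin 2 → ℝ) 1) ↔ (x ∈ Icc (0:ℝ) 1 ∧ y ∈ Icc (0:ℝ) 1) := by
  simp only [Set.mem_Icc, Pi.le_def, Fin.forall_fin_two]
  simp [Matrix.cons_val_zero, Matrix.cons_val_one, Matrix.head_cons]
  tauto

lemma pair_add_single_zero (x y t : ℝ) :
    ![x, y] + Pi.single (0 : Fin 2) t = ![x + t, y] := by
  funext i; fin_cases i <;> simp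

lemma pair_add_single_one (x y t : ℝ) :
    ![x, y] + Pi.single (1 : Fin 2) t = ![x, y + t] := by
  funext i; fin_cases i <;> simp

lemma oneD_bad_small (p : Polynomial ℝ) (n : ℕ) (hp : p.natDegree ≤ n) (μ t : ℝ)
    (ht : 0 ≤ t) :
    volume {x : ℝ | (x ∈ Icc (0:ℝ) 1 ∧ p.eval x ∈ Icc μ (μ+1)) ∧
      ¬ (x + t ∈ Icc (0:ℝ) 1 ∧ p.eval (x+t) ∈ Icc μ (μ+1))} ≤
      ENNReal.ofReal ((2*n+1) * t) := by
  classical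
  set q : Polynomial ℝ := (p - Polynomial.C μ) * (p - Polynomial.C (μ+1)) with hq
  set F : Finset ℝ := insert 1 q.roots.toFinset with hF
  have hsub : {x : ℝ | (x ∈ Icc (0:ℝ) 1 ∧ p.eval x ∈ Icc μ (μ+1)) ∧
      ¬ (x + t ∈ Icc (0:ℝ) 1 ∧ p.eval (x+t) ∈ Icc μ (μ+1))} ⊆
      ⋃ r ∈ F, Icc (r - t) r := by
    rintro x ⟨⟨hx01, hpx⟩, hbad⟩
    rw [not_and_or] at hbad
    have hx0 : (0:ℝ) ≤ x := hx01.1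
    have hx1 : x ≤ 1 := hx01.2
    rcases hbad with hbad | hbad
    · have h1 : 1 < x + t := by
        have := (by simpa [Set.mem_Icc] using hbad : 0 ≤ x + t → 1 < x + t)
        exact this (by linarith)
      refine mem_biUnion (Finset.mem_insert_self 1 _) ?_
      exact ⟨by linarith, hx1⟩
    · have hxt : x ≤ x + t := by linarith
      have hbad' : μ ≤ p.eval (x+t) → μ + 1 < p.eval (x+t) := by
        simpa [Set.mem_Icc] using hbad
      have hq0 : q ≠ 0 := by
        intro h0
        rcases mul_eq_zero.mp (hq ▸ h0) with h | h
        · have hpc : p = Polynomial.C μ := sub_eq_zero.mp h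
          rw [hpc] at hbad'
          simp at hbad'
          linarith
        · have hpc : p = Polynomial.C (μ+1) := sub_eq_zero.mp h
          rw [hpc] at hbad'
          simp at hbad'
      obtain ⟨r, hr_mem, hr_root⟩ : ∃ r ∈ Icc x (x+t), q.eval r = 0 := by
        rcases lt_or_ge (p.eval (x+t)) μ with h | h
        · have : μ ∈ Icc (p.eval (x+t)) (p.eval x) := ⟨le_of_lt h, hpx.1⟩
          obtain ⟨r, hr, hr2⟩ := intermediate_value_Icc' hxt
            (Polynomial.continuous p).continuousOn this
          exact ⟨r, hr, by simp [hq, hr2]⟩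
        · have h2 : μ + 1 < p.eval (x+t) := hbad' h
          have : μ + 1 ∈ Icc (p.eval x) (p.eval (x+t)) := ⟨hpx.2, le_of_lt h2⟩
          obtain ⟨r, hr, hr2⟩ := intermediate_value_Icc hxt
            (Polynomial.continuous p).continuousOn this
          exact ⟨r, hr, by simp [hq, hr2]⟩
      have hrF : r ∈ F := Finset.mem_insert_of_mem
        (by rw [Multiset.mem_toFinset, Polynomial.mem_roots hq0]; exact hr_root)
      exact mem_biUnion hrF ⟨by linarith [hr_mem.2], hr_mem.1⟩
  calc volume _ ≤ volume (⋃ r ∈ F, Icc (r - t) r) := measure_mono hsub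
    _ ≤ ∑ r ∈ F, volume (Icc (r - t) r) := measure_biUnion_finset_le F _
    _ = ∑ _r ∈ F, ENNReal.ofReal t := by
        refine Finset.sum_congr rfl fun r _ => ?_
        rw [Real.volume_Icc]; ring_nf
    _ = (F.card : ℝ≥0∞) * ENNReal.ofReal t := by
        rw [Finset.sum_const, nsmul_eq_mul]
    _ ≤ ((2*n+1 : ℕ) : ℝ≥0∞) * ENNReal.ofReal t := by
        gcongr
        have h1 : F.card ≤ q.roots.toFinset.card + 1 := Finset.card_insert_le _ _
        have h2 : q.roots.toFinset.card ≤ Multiset.card q.roots :=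
          Multiset.toFinset_card_le _
        have h3 : Multiset.card q.roots ≤ q.natDegree := q.card_roots'
        have h4 : q.natDegree ≤ 2 * n := by
          rw [hq]
          refine (Polynomial.natDegree_mul_le).trans ?_
          have := Polynomial.natDegree_sub_le p (Polynomial.C μ)
          have := Polynomial.natDegree_sub_le p (Polynomial.C (μ+1))
          simp only [Polynomial.natDegree_C] at *
          omega
        omega
    _ = ENNReal.ofReal ((2*n+1) * t) := by
        rw [← ENNReal.ofReal_natCast, ← ENNReal.ofReal_mul (by positivity)]
        push_cast
        ring_nf


lemma axis_bad_small (k : ℕ) (P : MvPolynomial (Fin 2) ℝ) (hP : P.totalDegree ≤ k)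
    (μ t : ℝ) (ht : 0 ≤ t) (i : Fin 2) :
    volume {ξ : Fin 2 → ℝ | ξ ∈ Zset P μ ∧ ξ + Pi.single i t ∉ Zset P μ} ≤
      ENNReal.ofReal ((2*k+1) * t) := by
  classical
  have hi2 : i = 0 ∨ i = 1 := by fin_cases i <;> simp
  set Z := Zset P μ with hZ
  set A : Set (Fin 2 → ℝ) := {ξ | ξ ∈ Z ∧ ξ + Pi.single i t ∉ Z} with hA
  have hAm : MeasurableSet A := by
    have : A = Z ∩ ((fun ξ => ξ + Pi.single i t) ⁻¹' Z)ᶜ := by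
      ext ξ; simp [hA, Set.mem_setOf_eq]
    rw [this]
    exact (Zset_measurable P μ).inter
      (((Zset_measurable P μ).preimage (measurable_add_const _)).compl)
  set e : (Fin 2 → ℝ) ≃ᵐ ℝ × ℝ := MeasurableEquiv.finTwoArrow with he
  have hmp : MeasurePreserving (⇑e.symm) volume volume :=
    (volume_preserving_finTwoArrow ℝ).symm e
  have h1 : volume A = volume (⇑e.symm ⁻¹' A) :=
    (hmp.measure_preimage hAm.nullMeasurableSet).symm
  have hBm : MeasurableSet (⇑e.symm ⁻¹' A) := hAm.preimage e.symm.measurable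
  have hsymm_apply : ∀ x y : ℝ, e.symm (x, y) = ![x, y] := by
    intro x y; funext j; fin_cases j <;> rfl
  rcases hi2 with rfl | rfl
  · -- shift in the first coordinate
    set p : ℝ → Polynomial ℝ :=
      fun y => MvPolynomial.aeval ![Polynomial.X, Polynomial.C y] P with hpdef
    have hpd : ∀ y, (p y).natDegree ≤ k := by
      intro y
      have := MvPolynomial.aeval_natDegree_le P hP ![Polynomial.X, Polynomial.C y]
        (n := 1) (fun j => by fin_cases j <;>
          simp [Polynomial.natDegree_X_le])
      simpa [mul_one] using this
    have hZmem : ∀ x y : ℝ, (![x, y] ∈ Z) ↔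
        ((x ∈ Icc (0:ℝ) 1 ∧ (p y).eval x ∈ Icc μ (μ+1)) ∧ y ∈ Icc (0:ℝ) 1) := by
      intro x y
      rw [hZ]
      simp only [Zset, Set.mem_setOf_eq]
      rw [mem_Icc_pair, eval_slice_x P x y]
      simp only [Set.mem_Icc]
      tauto
    have hslice : ∀ y : ℝ, volume ((fun x => (x, y)) ⁻¹' (⇑e.symm ⁻¹' A)) ≤
        (Icc (0:ℝ) 1).indicator (fun _ => ENNReal.ofReal ((2*↑k+1) * t)) y := by
      intro y
      by_cases hy : y ∈ Icc (0:ℝ) 1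
      · rw [Set.indicator_of_mem hy]
        refine le_trans (measure_mono ?_) (oneD_bad_small (p y) k (hpd y) μ t ht)
        intro x hx
        simp only [Set.mem_preimage, hsymm_apply] at hx
        obtain ⟨hx1, hx2⟩ := hx
        rw [pair_add_single_zero] at hx2
        rw [hZmem] at hx1
        refine ⟨hx1.1, fun hcon => hx2 ((hZmem (x+t) y).mpr ⟨hcon, hx1.2⟩)⟩
      · rw [Set.indicator_of_notMem hy]
        have : ((fun x => (x, y)) ⁻¹' (⇑e.symm ⁻¹' A)) = ∅ := by
          ext x
          simp only [Set.mem_preimage, hsymm_apply, Set.mem_empty_iff_false, iff_false]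
          rintro ⟨hx1, _⟩
          exact hy ((hZmem x y).mp hx1).2
        simp [this]
    calc volume A = volume (⇑e.symm ⁻¹' A) := h1
      _ = ∫⁻ y, volume ((fun x => (x, y)) ⁻¹' (⇑e.symm ⁻¹' A)) := by
          rw [MeasureTheory.Measure.volume_eq_prod, Measure.prod_apply_symm hBm]
      _ ≤ ∫⁻ y, (Icc (0:ℝ) 1).indicator (fun _ => ENNReal.ofReal ((2*↑k+1) * t)) y :=
          lintegral_mono hslice
      _ = ENNReal.ofReal ((2*↑k+1) * t) := by
          rw [lintegral_indicator measurableSet_Icc _, setLIntegral_const, Real.volume_Icc]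
          norm_num
  · -- shift in the second coordinate
    set p : ℝ → Polynomial ℝ :=
      fun x => MvPolynomial.aeval ![Polynomial.C x, Polynomial.X] P with hpdef
    have hpd : ∀ x, (p x).natDegree ≤ k := by
      intro x
      have := MvPolynomial.aeval_natDegree_le P hP ![Polynomial.C x, Polynomial.X]
        (n := 1) (fun j => by fin_cases j <;>
          simp [Polynomial.natDegree_X_le])
      simpa [mul_one] using this
    have hZmem : ∀ x y : ℝ, (![x, y] ∈ Z) ↔
        ((y ∈ Icc (0:ℝ) 1 ∧ (p x).eval y ∈ Icc μ (μ+1)) ∧ x ∈ Icc (0:ℝ) 1) := by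
      intro x y
      rw [hZ]
      simp only [Zset, Set.mem_setOf_eq]
      rw [mem_Icc_pair, eval_slice_y P x y]
      simp only [Set.mem_Icc]
      tauto
    have hslice : ∀ x : ℝ, volume (Prod.mk x ⁻¹' (⇑e.symm ⁻¹' A)) ≤
        (Icc (0:ℝ) 1).indicator (fun _ => ENNReal.ofReal ((2*↑k+1) * t)) x := by
      intro x
      by_cases hx : x ∈ Icc (0:ℝ) 1
      · rw [Set.indicator_of_mem hx]
        refine le_trans (measure_mono ?_) (oneD_bad_small (p x) k (hpd x) μ t ht)
        intro y hy
        simp only [Set.mem_preimage, hsymm_apply] at hy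
        obtain ⟨hy1, hy2⟩ := hy
        rw [pair_add_single_one] at hy2
        rw [hZmem] at hy1
        refine ⟨hy1.1, fun hcon => hy2 ((hZmem x (y+t)).mpr ⟨hcon, hy1.2⟩)⟩
      · rw [Set.indicator_of_notMem hx]
        have : (Prod.mk x ⁻¹' (⇑e.symm ⁻¹' A)) = ∅ := by
          ext y
          simp only [Set.mem_preimage, hsymm_apply, Set.mem_empty_iff_false, iff_false]
          rintro ⟨hy1, _⟩
          exact hx ((hZmem x y).mp hy1).2
        simp [this]
    calc volume A = volume (⇑e.symm ⁻¹' A) := h1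
      _ = ∫⁻ x, volume (Prod.mk x ⁻¹' (⇑e.symm ⁻¹' A)) := by
          rw [MeasureTheory.Measure.volume_eq_prod, Measure.prod_apply hBm]
      _ ≤ ∫⁻ x, (Icc (0:ℝ) 1).indicator (fun _ => ENNReal.ofReal ((2*↑k+1) * t)) x :=
          lintegral_mono hslice
      _ = ENNReal.ofReal ((2*↑k+1) * t) := by
          rw [lintegral_indicator measurableSet_Icc _, setLIntegral_const, Real.volume_Icc]
          norm_num


set_option maxHeartbeats 1000000 in
lemma shift_bad_small (k : ℕ) (P : MvPolynomial (Fin 2) ℝ) (hP : P.totalDegree ≤ k)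
    (μ : ℝ) (v : Fin 2 → ℝ) (hv : ∀ i, 0 ≤ v i) :
    volume {ξ : Fin 2 → ℝ | ξ ∈ Zset P μ ∧ ξ + v ∉ Zset P μ} ≤
      ENNReal.ofReal ((2*k+1) * v 0) + ENNReal.ofReal ((2*k+1) * v 1) := by
  classical
  set Z := Zset P μ with hZ
  set w0 : Fin 2 → ℝ := Pi.single (0 : Fin 2) (v 0) with hw0
  set w1 : Fin 2 → ℝ := Pi.single (1 : Fin 2) (v 1) with hw1
  have hvsum : w0 + w1 = v := by
    funext j; fin_cases j <;> simp [hw0, hw1]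
  set B0 := {ξ : Fin 2 → ℝ | ξ ∈ Z ∧ ξ + w0 ∉ Z} with hB0
  set B1 := {ξ : Fin 2 → ℝ | ξ ∈ Z ∧ ξ + w1 ∉ Z} with hB1
  have hsub : {ξ | ξ ∈ Z ∧ ξ + v ∉ Z} ⊆ B0 ∪ ((· + w0) ⁻¹' B1) := by
    rintro ξ ⟨h1, h2⟩
    by_cases h3 : ξ + w0 ∈ Z
    · right
      refine ⟨h3, fun hcon => h2 ?_⟩
      rwa [add_assoc, hvsum] at hcon
    · left; exact ⟨h1, h3⟩
  calc volume {ξ | ξ ∈ Z ∧ ξ + v ∉ Z}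
      ≤ volume (B0 ∪ ((· + w0) ⁻¹' B1)) := measure_mono hsub
    _ ≤ volume B0 + volume ((· + w0) ⁻¹' B1) := measure_union_le _ _
    _ = volume B0 + volume B1 := by rw [measure_preimage_add_right]
    _ ≤ _ := add_le_add
        (axis_bad_small k P hP μ (v 0) (hv 0) 0)
        (axis_bad_small k P hP μ (v 1) (hv 1) 1)

/-- Lemma 4.3 (large intersection of shifts), for stationary sets of bivariate
polynomials of degree at most `k`: there is `c_k > 0` such that whenever
`Γ = {ξ ∈ [0,1]² : μ ≤ P(ξ) ≤ μ+1}` has measure `> δ`, the intersection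
`⋂_{a ∈ {0,…,k}²} (Γ − c_k δ a)` has measure `> δ/2`. -/
theorem large_intersection_of_shifts (k : ℕ) (hk : 1 ≤ k) :
    ∃ c : ℝ, 0 < c ∧
      ∀ P : MvPolynomial (Fin 2) ℝ, P.totalDegree ≤ k →
        ∀ μ δ : ℝ, 0 < δ →
          ENNReal.ofReal δ < volume (Zset P μ) →
          ENNReal.ofReal (δ / 2) <
            volume (⋂ a ∈ {a : Fin 2 → ℕ | ∀ i, a i ≤ k},
              {ξ : Fin 2 → ℝ | (fun i => ξ i + c * δ * (a i : ℝ)) ∈ Zset P μ}) := by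
  classical
  have hk0 : (0:ℝ) < k := by exact_mod_cast hk
  set c : ℝ := 1 / (4 * ((k:ℝ)+1)^2 * (2*(k:ℝ)+1) * (k:ℝ)) with hc
  have hcpos : 0 < c := by rw [hc]; positivity
  refine ⟨c, hcpos, ?_⟩
  intro P hP μ δ hδ hvol
  set Z := Zset P μ with hZ
  set F : Finset (Fin 2 → ℕ) := Finset.Icc 0 (fun _ => k) with hF
  have hFmem : ∀ a : Fin 2 → ℕ, a ∈ F ↔ ∀ i, a i ≤ k := by
    intro a
    simp [hF, Finset.mem_Icc, Pi.le_def]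
  have hsetF : {a : Fin 2 → ℕ | ∀ i, a i ≤ k} = (↑F : Set (Fin 2 → ℕ)) := by
    ext a; simp [hFmem]
  have hcard : F.card = (k+1)^2 := by
    rw [hF, Pi.card_Icc]
    simp [Nat.card_Icc, sq]
  rw [hsetF]
  set I : Set (Fin 2 → ℝ) := ⋂ a ∈ (↑F : Set (Fin 2 → ℕ)),
      {ξ : Fin 2 → ℝ | (fun i => ξ i + c * δ * (a i : ℝ)) ∈ Z} with hI
  set U : Set (Fin 2 → ℝ) :=
    ⋃ a ∈ F, {ξ : Fin 2 → ℝ | ξ ∈ Z ∧ ξ + (fun i => c * δ * (a i : ℝ)) ∉ Z} with hU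
  have hZsub : Z ⊆ (Z \ U) ∪ U := by
    intro ξ hξ
    by_cases h : ξ ∈ U
    · exact Or.inr h
    · exact Or.inl ⟨hξ, h⟩
  have hdiff : Z \ U ⊆ I := by
    rintro ξ ⟨hξZ, hξU⟩
    rw [hI, Set.mem_iInter₂]
    intro a ha
    by_contra hcon
    apply hξU
    rw [hU, Set.mem_iUnion₂]
    refine ⟨a, by simpa using ha, hξZ, fun hmem => hcon ?_⟩
    exact hmem
  set M : ℝ := (2*(k:ℝ)+1) * (c * δ * k) with hM
  have hUle : volume U ≤ ENNReal.ofReal (δ/2) := by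
    have hstep : ∀ a ∈ F,
        volume {ξ : Fin 2 → ℝ | ξ ∈ Z ∧ ξ + (fun i => c * δ * (a i : ℝ)) ∉ Z} ≤
          2 * ENNReal.ofReal M := by
      intro a ha
      have h1 := shift_bad_small k P hP μ (fun i => c * δ * (a i : ℝ))
        (fun i => by positivity)
      refine h1.trans ?_
      have hcd : (0:ℝ) ≤ c * δ := le_of_lt (mul_pos hcpos hδ)
      have hbound : ∀ i : Fin 2, c * δ * (a i : ℝ) ≤ c * δ * k := by
        intro i
        have hai : (a i : ℝ) ≤ k := by exact_mod_cast (hFmem a).mp ha i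
        exact mul_le_mul_of_nonneg_left hai hcd
      rw [show (2:ℝ≥0∞) * ENNReal.ofReal M = ENNReal.ofReal M + ENNReal.ofReal M from
        two_mul _]
      apply add_le_add <;> apply ENNReal.ofReal_le_ofReal <;> rw [hM] <;> beta_reduce <;>
        [nlinarith [hbound 0, hk0]; nlinarith [hbound 1, hk0]]
    calc volume U ≤ ∑ a ∈ F,
          volume {ξ : Fin 2 → ℝ | ξ ∈ Z ∧ ξ + (fun i => c * δ * (a i : ℝ)) ∉ Z} :=
          measure_biUnion_finset_le F _
      _ ≤ ∑ _a ∈ F, 2 * ENNReal.ofReal M := Finset.sum_le_sum hstep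
      _ = (F.card : ℝ≥0∞) * (2 * ENNReal.ofReal M) := by
          rw [Finset.sum_const, nsmul_eq_mul]
      _ = ENNReal.ofReal (((k+1)^2 : ℕ) * (2 * M)) := by
          rw [hcard]
          have : ENNReal.ofReal ((((k+1)^2 : ℕ) : ℝ) * (2 * M)) =
              ((((k+1)^2 : ℕ) : ℝ≥0∞)) * (2 * ENNReal.ofReal M) := by
            rw [ENNReal.ofReal_mul (by positivity),
              ENNReal.ofReal_mul (by norm_num : (0:ℝ) ≤ 2),
              ENNReal.ofReal_natCast, ENNReal.ofReal_ofNat]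
          rw [this]
      _ = ENNReal.ofReal (δ/2) := by
          congr 1
          rw [hM, hc]
          push_cast
          field_simp
          ring
  have hmain : volume Z ≤ volume I + ENNReal.ofReal (δ/2) :=
    calc volume Z ≤ volume ((Z \ U) ∪ U) := measure_mono hZsub
      _ ≤ volume (Z \ U) + volume U := measure_union_le _ _
      _ ≤ volume I + ENNReal.ofReal (δ/2) :=
          add_le_add (measure_mono hdiff) hUle
  have hlt : ENNReal.ofReal (δ/2) + ENNReal.ofReal (δ/2) <
      volume I + ENNReal.ofReal (δ/2) := by
    calc ENNReal.ofReal (δ/2) + ENNReal.ofReal (δ/2)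
        = ENNReal.ofReal δ := by
          rw [← ENNReal.ofReal_add (by positivity) (by positivity)]
          norm_num
      _ < volume Z := hvol
      _ ≤ _ := hmain
  exact (ENNReal.add_lt_add_iff_right ENNReal.ofReal_ne_top).mp hlt
end
end

section
/- For every integer k ≥ 1 there exists a constant c_k > 0 such that the following holds: for every δ ∈ (0,1], every axis-parallel closed square Δ ⊆ [0,1]² of side length δ, every ξ ∈ Δ, and every multi-index β = (β₁,β₂) ∈ ℕ² with 1 ≤ β₁ + β₂ ≤ k, there exists a point p ∈ ℝ^N such that p + t · ∂^β φ_k(ξ) lies in the closed convex hull of φ_k(Δ) for every t ∈ [0, c_k δ^{β₁+β₂}]. Here ∂^β := ∂_{ξ₁}^{β₁} ∂_{ξ₂}^{β₂} acts componentwise on φ_k. -/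
open MeasureTheory Real Set
open scoped ENNReal

noncomputable section

/-- Index set for multi-indices `β = (β₁, β₂) ∈ ℕ²` with `1 ≤ β₁ + β₂ ≤ k`;
its cardinality is `N = (k+1)(k+2)/2 − 1`. -/
def Idx (k : ℕ) : Type :=
  {β : Fin (k + 1) × Fin (k + 1) // 1 ≤ (β.1 : ℕ) + (β.2 : ℕ) ∧ (β.1 : ℕ) + (β.2 : ℕ) ≤ k}

instance (k : ℕ) : Fintype (Idx k) := by unfold Idx; infer_instance

/-- The Parsell–Vinogradov map `φ_k(ξ) = (ξ₁^{β₁} ξ₂^{β₂})_{1 ≤ β₁+β₂ ≤ k}`. -/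
def phiPV (k : ℕ) (ξ : Fin 2 → ℝ) : Idx k → ℝ :=
  fun γ => ξ 0 ^ (γ.1.1 : ℕ) * ξ 1 ^ (γ.1.2 : ℕ)

/-- The componentwise partial derivative `∂^b φ_k = ∂_{ξ₁}^{b₁} ∂_{ξ₂}^{b₂} φ_k`:
its `γ`-component is `γ₁⋯(γ₁−b₁+1) · γ₂⋯(γ₂−b₂+1) · ξ₁^{γ₁−b₁} ξ₂^{γ₂−b₂}`
if `b ≤ γ` componentwise, and `0` otherwise. -/
def DphiPV (k : ℕ) (b : Fin 2 → ℕ) (ξ : Fin 2 → ℝ) : Idx k → ℝ := fun γ =>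
  if b 0 ≤ (γ.1.1 : ℕ) ∧ b 1 ≤ (γ.1.2 : ℕ) then
    ((γ.1.1 : ℕ).descFactorial (b 0) : ℝ) * ((γ.1.2 : ℕ).descFactorial (b 1) : ℝ) *
      ξ 0 ^ ((γ.1.1 : ℕ) - b 0) * ξ 1 ^ ((γ.1.2 : ℕ) - b 1)
  else 0


open Finset Polynomial


lemma choose_mul_descFactorial' (n m j : ℕ) :
    n.choose (j + m) * (j + m).descFactorial m = n.descFactorial m * (n - m).choose j := by
  rcases le_or_gt (j + m) n with h | h
  · have hm : m ≤ n := le_trans (Nat.le_add_left m j) h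
    have h2 := Nat.choose_mul (n := n) (Nat.le_add_left m j)
    rw [Nat.add_sub_cancel] at h2
    rw [Nat.descFactorial_eq_factorial_mul_choose, Nat.descFactorial_eq_factorial_mul_choose,
      mul_left_comm, h2]
    ring
  · rcases le_or_gt m n with hm | hm
    · rw [Nat.choose_eq_zero_of_lt h, Nat.zero_mul,
        Nat.choose_eq_zero_of_lt (by omega), Nat.mul_zero]
    · rw [Nat.choose_eq_zero_of_lt h, Nat.zero_mul,
        Nat.descFactorial_eq_zero_iff_lt.2 hm, Nat.zero_mul]

/-- one-dimensional key identity -/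
lemma key1d (k n m : ℕ) (hn : n ≤ k) (a d u : ℝ) :
    ∑ i ∈ Finset.range (k + 1),
      (n.choose i : ℝ) * (i.descFactorial m : ℝ) * a ^ (n - i) * (d ^ i * u ^ (i - m))
      = (n.descFactorial m : ℝ) * d ^ m * (a + d * u) ^ (n - m) := by
  rw [← Finset.sum_subset (Finset.range_subset_range.2 (by omega : n + 1 ≤ k + 1))
      (fun i _ hi => by
        have : n < i := by simp only [Finset.mem_range] at hi ⊢; omega
        rw [Nat.choose_eq_zero_of_lt this]; push_cast; ring)]
  rcases lt_or_ge n m with hnm | hnm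
  · rw [Nat.descFactorial_eq_zero_iff_lt.2 hnm]
    rw [Finset.sum_eq_zero]
    · simp
    intro i hi
    have : i < m := by simp only [Finset.mem_range] at hi; omega
    rw [Nat.descFactorial_eq_zero_iff_lt.2 this]
    push_cast; ring
  · have h1 : ∀ i ∈ Finset.range m,
        (n.choose i : ℝ) * (i.descFactorial m : ℝ) * a ^ (n - i) * (d ^ i * u ^ (i - m)) = 0 := by
      intro i hi
      rw [Nat.descFactorial_eq_zero_iff_lt.2 (Finset.mem_range.1 hi)]
      push_cast; ring
    rw [Finset.range_eq_Ico, ← Finset.sum_Ico_consecutive _ (Nat.zero_le m) (by omega : m ≤ n + 1),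
      ← Finset.range_eq_Ico, Finset.sum_eq_zero h1, zero_add, Finset.sum_Ico_eq_sum_range]
    have hrange : n + 1 - m = n - m + 1 := by omega
    rw [hrange]
    have hterm : ∀ j ∈ Finset.range (n - m + 1),
        (n.choose (m + j) : ℝ) * ((m + j).descFactorial m : ℝ) * a ^ (n - (m + j)) *
          (d ^ (m + j) * u ^ (m + j - m))
        = (n.descFactorial m : ℝ) * d ^ m *
            ((d * u) ^ j * a ^ (n - m - j) * ((n - m).choose j : ℝ)) := by
      intro j hj
      have hid : ((n.choose (j + m) : ℝ)) * (((j + m).descFactorial m : ℝ))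
          = (n.descFactorial m : ℝ) * ((n - m).choose j : ℝ) := by
        rw [← Nat.cast_mul, choose_mul_descFactorial', Nat.cast_mul]
      rw [show m + j - m = j from by omega, show n - (m + j) = n - m - j from by omega,
        show m + j = j + m from by omega, pow_add]
      calc (n.choose (j + m) : ℝ) * ((j + m).descFactorial m : ℝ) * a ^ (n - m - j) *
            (d ^ j * d ^ m * u ^ j)
          = ((n.choose (j + m) : ℝ) * ((j + m).descFactorial m : ℝ)) *
            (a ^ (n - m - j) * (d ^ j * d ^ m * u ^ j)) := by ring
        _ = _ := by rw [hid]; ring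
    rw [Finset.sum_congr rfl hterm, ← Finset.mul_sum, add_comm a (d*u), add_pow]

/-- if-free formula for a component of the derivative -/
def Dt (b : Fin 2 → ℕ) (u : Fin 2 → ℝ) (g : ℕ × ℕ) : ℝ :=
  (g.1.descFactorial (b 0) : ℝ) * (g.2.descFactorial (b 1) : ℝ) *
    u 0 ^ (g.1 - b 0) * u 1 ^ (g.2 - b 1)

lemma DphiPV_eq (k : ℕ) (b : Fin 2 → ℕ) (ξ : Fin 2 → ℝ) (γ : Idx k) :
    DphiPV k b ξ γ = Dt b ξ ((γ.1.1 : ℕ), (γ.1.2 : ℕ)) := by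
  unfold DphiPV Dt
  split_ifs with h
  · rfl
  · rcases Decidable.not_and_iff_or_not.mp h with h1 | h1
    · rw [Nat.descFactorial_eq_zero_iff_lt.2 (by omega), Nat.cast_zero]; ring
    · rw [Nat.descFactorial_eq_zero_iff_lt.2 (show (γ.1.2:ℕ) < b 1 by omega), Nat.cast_zero]; ring

/-- entries of the affine rescaling matrix -/
def cA (a : Fin 2 → ℝ) (d : ℝ) (g al : ℕ × ℕ) : ℝ :=
  (g.1.choose al.1 : ℝ) * (g.2.choose al.2 : ℝ) * a 0 ^ (g.1 - al.1) * a 1 ^ (g.2 - al.2) *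
    (d ^ al.1 * d ^ al.2)


lemma fullsum (k : ℕ) (a : Fin 2 → ℝ) (d : ℝ) (b : Fin 2 → ℕ) (u : Fin 2 → ℝ)
    (g : ℕ × ℕ) (h1 : g.1 ≤ k) (h2 : g.2 ≤ k) :
    ∑ α : Fin (k + 1) × Fin (k + 1), cA a d g (α.1.1, α.2.1) * Dt b u (α.1.1, α.2.1)
      = d ^ (b 0 + b 1) * Dt b (fun i => a i + d * u i) g := by
  rw [Fintype.sum_prod_type]
  have step : ∀ x : Fin (k + 1),
      ∑ y : Fin (k + 1), cA a d g (x.1, y.1) * Dt b u (x.1, y.1)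
      = ((g.1.choose x.1 : ℝ) * (x.1.descFactorial (b 0) : ℝ) * a 0 ^ (g.1 - x.1) *
          (d ^ (x.1 : ℕ) * u 0 ^ ((x.1 : ℕ) - b 0)))
        * ∑ y : Fin (k + 1), ((g.2.choose y.1 : ℝ) * ((y.1 : ℕ).descFactorial (b 1) : ℝ) *
            a 1 ^ (g.2 - y.1) * (d ^ (y.1 : ℕ) * u 1 ^ ((y.1 : ℕ) - b 1))) := by
    intro x
    rw [Finset.mul_sum]
    exact Finset.sum_congr rfl fun y _ => by unfold cA Dt; push_cast; ring
  rw [Finset.sum_congr rfl (fun x _ => step x), ← Finset.sum_mul]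
  rw [Fin.sum_univ_eq_sum_range (fun i => (g.1.choose i : ℝ) * (i.descFactorial (b 0) : ℝ) *
      a 0 ^ (g.1 - i) * (d ^ i * u 0 ^ (i - b 0))),
    Fin.sum_univ_eq_sum_range (fun i => (g.2.choose i : ℝ) * (i.descFactorial (b 1) : ℝ) *
      a 1 ^ (g.2 - i) * (d ^ i * u 1 ^ (i - b 1)))]
  rw [key1d k g.1 (b 0) h1 (a 0) d (u 0), key1d k g.2 (b 1) h2 (a 1) d (u 1)]
  unfold Dt
  rw [pow_add]
  ring

lemma sum_idx_eq (k : ℕ) (f : ℕ × ℕ → ℝ)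
    (hbig : ∀ x y : ℕ, x ≤ k → y ≤ k → k < x + y → f (x, y) = 0) :
    (∑ α : Idx k, f ((α.1.1 : ℕ), (α.1.2 : ℕ)))
      = (∑ α : Fin (k + 1) × Fin (k + 1), f ((α.1 : ℕ), (α.2 : ℕ))) - f (0, 0) := by
  classical
  set P : Fin (k + 1) × Fin (k + 1) → Prop :=
    fun β => 1 ≤ (β.1 : ℕ) + (β.2 : ℕ) ∧ (β.1 : ℕ) + (β.2 : ℕ) ≤ k with hP
  have h1 : (∑ α : Idx k, f ((α.1.1 : ℕ), (α.1.2 : ℕ)))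
      = ∑ α ∈ Finset.univ.filter P, f ((α.1 : ℕ), (α.2 : ℕ)) := by
    rw [Finset.sum_subtype (p := P) (Finset.univ.filter P) (fun x => by simp [hP])
      (fun α => f ((α.1 : ℕ), (α.2 : ℕ)))]
    rfl
  have h2 : ∑ α ∈ Finset.univ.filter (fun x => ¬ P x), f ((α.1 : ℕ), (α.2 : ℕ)) = f (0, 0) := by
    apply Finset.sum_eq_single_of_mem ((0 : Fin (k+1)), (0 : Fin (k+1)))
    · simp [hP]
    · intro β hβ hne
      simp only [Finset.mem_filter, hP, not_and, not_le] at hβ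
      have hβ1 : (β.1 : ℕ) ≤ k := by omega
      have hβ2 : (β.2 : ℕ) ≤ k := by omega
      have hge : 1 ≤ (β.1 : ℕ) + (β.2 : ℕ) := by
        by_contra hcon
        apply hne
        have e1 : (β.1 : ℕ) = 0 := by omega
        have e2 : (β.2 : ℕ) = 0 := by omega
        exact Prod.ext (Fin.ext e1) (Fin.ext e2)
      exact hbig _ _ hβ1 hβ2 (by omega)
  rw [h1, eq_sub_iff_add_eq, ← h2, Finset.sum_filter_add_sum_filter_not]

-- chunk 3
def Lmap (k : ℕ) (a : Fin 2 → ℝ) (d : ℝ) : (Idx k → ℝ) →ₗ[ℝ] (Idx k → ℝ) where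
  toFun x := fun γ =>
    ∑ α : Idx k, cA a d ((γ.1.1 : ℕ), (γ.1.2 : ℕ)) ((α.1.1 : ℕ), (α.1.2 : ℕ)) * x α
  map_add' x y := by
    funext γ
    simp [mul_add, Finset.sum_add_distrib]
  map_smul' r x := by
    funext γ
    simp only [Pi.smul_apply, smul_eq_mul, RingHom.id_apply, Finset.mul_sum]
    exact Finset.sum_congr rfl fun α _ => by ring

lemma L_apply_Dphi (k : ℕ) (a : Fin 2 → ℝ) (d : ℝ) (b : Fin 2 → ℕ) (u : Fin 2 → ℝ)
    (γ : Idx k) :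
    Lmap k a d (DphiPV k b u) γ
      = d ^ (b 0 + b 1) * DphiPV k b (fun i => a i + d * u i) γ
        - cA a d ((γ.1.1 : ℕ), (γ.1.2 : ℕ)) (0, 0) * Dt b u (0, 0) := by
  have hγ : (γ.1.1 : ℕ) + (γ.1.2 : ℕ) ≤ k := γ.2.2
  have hbig : ∀ x y : ℕ, x ≤ k → y ≤ k → k < x + y →
      cA a d ((γ.1.1 : ℕ), (γ.1.2 : ℕ)) (x, y) * Dt b u (x, y) = 0 := by
    intro x y hx hy hxy
    have : (γ.1.1 : ℕ) < x ∨ (γ.1.2 : ℕ) < y := by omega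
    unfold cA
    rcases this with h | h
    · rw [Nat.choose_eq_zero_of_lt h]; push_cast; ring
    · rw [Nat.choose_eq_zero_of_lt h]; push_cast; ring
  calc Lmap k a d (DphiPV k b u) γ
      = ∑ α : Idx k, cA a d ((γ.1.1 : ℕ), (γ.1.2 : ℕ)) ((α.1.1 : ℕ), (α.1.2 : ℕ)) *
          Dt b u ((α.1.1 : ℕ), (α.1.2 : ℕ)) := Finset.sum_congr rfl fun α _ => by rw [DphiPV_eq]
    _ = (∑ α : Fin (k + 1) × Fin (k + 1), cA a d ((γ.1.1 : ℕ), (γ.1.2 : ℕ)) ((α.1 : ℕ), (α.2 : ℕ)) *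
          Dt b u ((α.1 : ℕ), (α.2 : ℕ))) - cA a d ((γ.1.1 : ℕ), (γ.1.2 : ℕ)) (0, 0) * Dt b u (0, 0) :=
        sum_idx_eq k (fun g => cA a d ((γ.1.1 : ℕ), (γ.1.2 : ℕ)) g * Dt b u g) hbig
    _ = d ^ (b 0 + b 1) * DphiPV k b (fun i => a i + d * u i) γ
        - cA a d ((γ.1.1 : ℕ), (γ.1.2 : ℕ)) (0, 0) * Dt b u (0, 0) := by
        rw [fullsum k a d b u _ (by omega) (by omega), DphiPV_eq]

lemma Dt_zero_zero (b : Fin 2 → ℕ) (hb : 1 ≤ b 0 + b 1) (u : Fin 2 → ℝ) :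
    Dt b u (0, 0) = 0 := by
  unfold Dt
  have : 1 ≤ b 0 ∨ 1 ≤ b 1 := by omega
  rcases this with h | h
  · rw [Nat.descFactorial_eq_zero_iff_lt.2 (show (0:ℕ) < b 0 by omega)]; push_cast; ring
  · rw [Nat.descFactorial_eq_zero_iff_lt.2 (show (0:ℕ) < b 1 by omega)]; push_cast; ring

lemma L_Dphi (k : ℕ) (a : Fin 2 → ℝ) (d : ℝ) (b : Fin 2 → ℕ) (hb : 1 ≤ b 0 + b 1)
    (u : Fin 2 → ℝ) :
    Lmap k a d (DphiPV k b u) = d ^ (b 0 + b 1) • DphiPV k b (fun i => a i + d * u i) := by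
  funext γ
  rw [Pi.smul_apply, smul_eq_mul, L_apply_Dphi, Dt_zero_zero b hb, mul_zero, sub_zero]

lemma phiPV_eq_DphiPV (k : ℕ) (u : Fin 2 → ℝ) :
    phiPV k u = DphiPV k (fun _ => 0) u := by
  funext γ
  simp [phiPV, DphiPV]

lemma T_phi (k : ℕ) (a : Fin 2 → ℝ) (d : ℝ) (u : Fin 2 → ℝ) :
    phiPV k a + Lmap k a d (phiPV k u) = phiPV k (fun i => a i + d * u i) := by
  funext γ
  rw [Pi.add_apply, phiPV_eq_DphiPV k u, L_apply_Dphi]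
  have h1 : Dt (fun _ => 0) u (0, 0) = 1 := by simp [Dt]
  have h2 : cA a d ((γ.1.1 : ℕ), (γ.1.2 : ℕ)) (0, 0) = phiPV k a γ := by
    simp [cA, phiPV]
  rw [h1, h2, mul_one]
  rw [phiPV_eq_DphiPV k (fun i => a i + d * u i)]
  ring

lemma poly_vanish (k : ℕ) (c : ℕ → ℕ → ℝ)
    (h : ∀ x ∈ Icc (0:ℝ) 1, ∀ y ∈ Icc (0:ℝ) 1,
      ∑ i ∈ Finset.range (k+1), ∑ j ∈ Finset.range (k+1), c i j * x ^ i * y ^ j = 0) :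
    ∀ i j, i ≤ k → j ≤ k → c i j = 0 := by
  set Q : ℕ → Polynomial ℝ := fun i => ∑ j ∈ Finset.range (k+1), Polynomial.C (c i j) * X ^ j
    with hQ
  set R : ℝ → Polynomial ℝ := fun y =>
    ∑ i ∈ Finset.range (k+1), Polynomial.C ((Q i).eval y) * X ^ i with hR
  have coeffR : ∀ y : ℝ, ∀ i ≤ k, (R y).coeff i = (Q i).eval y := by
    intro y i hi
    rw [hR]
    simp only [finset_sum_coeff, coeff_C_mul, coeff_X_pow, mul_ite, mul_one, mul_zero]
    rw [Finset.sum_ite_eq (Finset.range (k+1)) i (fun i' => (Q i').eval y)]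
    simp [Nat.lt_succ_iff.2 hi]
  have coeffQ : ∀ i, ∀ j ≤ k, (Q i).coeff j = c i j := by
    intro i j hj
    rw [hQ]
    simp only [finset_sum_coeff, coeff_C_mul, coeff_X_pow, mul_ite, mul_one, mul_zero]
    rw [Finset.sum_ite_eq (Finset.range (k+1)) j (fun j' => c i j')]
    simp [Nat.lt_succ_iff.2 hj]
  have hRzero : ∀ y ∈ Icc (0:ℝ) 1, R y = 0 := by
    intro y hy
    apply Polynomial.eq_zero_of_infinite_isRoot
    apply Set.Infinite.mono (s := Icc (0:ℝ) 1) ?_ (Set.Icc_infinite zero_lt_one)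
    intro x hx
    show IsRoot (R y) x
    unfold R
    rw [IsRoot, eval_finset_sum]
    simp only [eval_mul, eval_C, eval_pow, eval_X]
    have := h x hx y hy
    rw [← this]
    refine Finset.sum_congr rfl fun i _ => ?_
    rw [hQ]
    simp only [eval_finset_sum, eval_mul, eval_C, eval_pow, eval_X, Finset.sum_mul]
    refine Finset.sum_congr rfl fun j _ => by ring
  have hQzero : ∀ i ≤ k, Q i = 0 := by
    intro i hi
    apply Polynomial.eq_zero_of_infinite_isRoot
    apply Set.Infinite.mono (s := Icc (0:ℝ) 1) ?_ (Set.Icc_infinite zero_lt_one)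
    intro y hy
    show IsRoot (Q i) y
    rw [IsRoot, ← coeffR y i hi, hRzero y hy, coeff_zero]
  intro i j hi hj
  rw [← coeffQ i j hj, hQzero i hi, coeff_zero]

lemma span_top (k : ℕ) :
    Submodule.span ℝ (phiPV k '' Icc (0 : Fin 2 → ℝ) 1) = ⊤ := by
  classical
  by_contra hne
  set p := Submodule.span ℝ (phiPV k '' Icc (0 : Fin 2 → ℝ) 1) with hp
  obtain ⟨x, -, hx⟩ := SetLike.exists_of_lt (lt_top_iff_ne_top.2 hne : p < ⊤)
  have hxq : p.mkQ x ≠ 0 := by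
    rw [Ne, Submodule.mkQ_apply, Submodule.Quotient.mk_eq_zero]
    exact hx
  obtain ⟨g, hg⟩ :=
    not_forall.1 ((Module.forall_dual_apply_eq_zero_iff ℝ (p.mkQ x)).not.2 hxq)
  set f : (Idx k → ℝ) →ₗ[ℝ] ℝ := g.comp p.mkQ with hf
  have hfx : f x ≠ 0 := hg
  have hvan : ∀ v ∈ phiPV k '' Icc (0 : Fin 2 → ℝ) 1, f v = 0 := by
    intro v hv
    have hvp : v ∈ p := Submodule.subset_span hv
    simp only [hf, LinearMap.comp_apply, Submodule.mkQ_apply,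
      (Submodule.Quotient.mk_eq_zero p).2 hvp, map_zero]
  set cfun : Fin (k + 1) × Fin (k + 1) → ℝ :=
    fun β => f (fun γ' : Idx k => if (γ'.1 : Fin (k + 1) × Fin (k + 1)) = β then 1 else 0)
    with hcfun
  have hcbig : ∀ β : Fin (k + 1) × Fin (k + 1),
      ¬(1 ≤ (β.1 : ℕ) + (β.2 : ℕ) ∧ (β.1 : ℕ) + (β.2 : ℕ) ≤ k) → cfun β = 0 := by
    intro β hβ
    have hz : (fun γ' : Idx k =>
        if (γ'.1 : Fin (k + 1) × Fin (k + 1)) = β then (1:ℝ) else 0) = 0 := by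
      funext γ'
      rw [if_neg, Pi.zero_apply]
      intro hcon
      exact hβ (hcon ▸ γ'.2)
    simp only [hcfun, hz, map_zero]
  set c : ℕ → ℕ → ℝ := fun i j =>
    if hij : i < k + 1 ∧ j < k + 1 then cfun (⟨i, hij.1⟩, ⟨j, hij.2⟩) else 0 with hc
  have hceq : ∀ β : Fin (k + 1) × Fin (k + 1), c (β.1 : ℕ) (β.2 : ℕ) = cfun β := by
    intro β
    simp only [hc]
    rw [dif_pos ⟨β.1.isLt, β.2.isLt⟩]
  have key : ∀ u ∈ Icc (0 : Fin 2 → ℝ) 1,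
      ∑ i ∈ Finset.range (k+1), ∑ j ∈ Finset.range (k+1),
        c i j * (u 0) ^ i * (u 1) ^ j = 0 := by
    intro u hu
    set F : ℕ × ℕ → ℝ := fun gn => c gn.1 gn.2 * (u 0) ^ gn.1 * (u 1) ^ gn.2 with hFdef
    have expand : f (phiPV k u) = ∑ γ : Idx k, F ((γ.1.1 : ℕ), (γ.1.2 : ℕ)) := by
      rw [LinearMap.pi_apply_eq_sum_univ f (phiPV k u)]
      refine Finset.sum_congr rfl fun γ _ => ?_
      have e1 : (fun j : Idx k => if γ = j then (1:ℝ) else 0)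
          = (fun γ' : Idx k => if (γ'.1 : Fin (k + 1) × Fin (k + 1)) = γ.1 then 1 else 0) := by
        funext γ'
        by_cases hh : γ = γ'
        · simp [hh]
        · rw [if_neg hh, if_neg fun hcon => hh (Subtype.ext hcon.symm)]
      simp only [smul_eq_mul, e1, hFdef]
      show phiPV k u γ * cfun γ.1 = c (γ.1.1 : ℕ) (γ.1.2 : ℕ) * (u 0) ^ (γ.1.1:ℕ) * (u 1) ^ (γ.1.2:ℕ)
      rw [hceq, phiPV]
      ring
    have hF : ∀ x y : ℕ, x ≤ k → y ≤ k → k < x + y → F (x, y) = 0 := by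
      intro x y hxk hyk hk
      have hcz : c x y = 0 := by
        simp only [hc]
        rw [dif_pos ⟨by omega, by omega⟩]
        apply hcbig
        simp only [not_and, not_le]
        intro
        omega
      simp only [hFdef, hcz, zero_mul]
    have hF00 : F (0, 0) = 0 := by
      have hcz : c 0 0 = 0 := by
        simp only [hc]
        rw [dif_pos ⟨by omega, by omega⟩]
        apply hcbig
        simp
      simp only [hFdef, hcz, zero_mul]
    have h1 := sum_idx_eq k F hF
    rw [← expand, hvan (phiPV k u) (Set.mem_image_of_mem _ hu), hF00, sub_zero] at h1
    calc ∑ i ∈ Finset.range (k+1), ∑ j ∈ Finset.range (k+1), c i j * (u 0) ^ i * (u 1) ^ j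
        = ∑ α : Fin (k + 1) × Fin (k + 1), F ((α.1 : ℕ), (α.2 : ℕ)) := by
          rw [Fintype.sum_prod_type]
          rw [← Fin.sum_univ_eq_sum_range
            (fun i => ∑ j ∈ Finset.range (k+1), c i j * (u 0) ^ i * (u 1) ^ j) (k+1)]
          exact Finset.sum_congr rfl fun i _ =>
            (Fin.sum_univ_eq_sum_range (fun j => c (i:ℕ) j * (u 0) ^ (i:ℕ) * (u 1) ^ j) (k+1)).symm
      _ = 0 := h1.symm
  -- conclude all c vanish
  have hcall : ∀ β : Fin (k + 1) × Fin (k + 1), cfun β = 0 := by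
    intro β
    rw [← hceq]
    refine poly_vanish k c ?_ _ _ (by omega) (by omega)
    intro x hx y hy
    set u : Fin 2 → ℝ := fun i => if i = 0 then x else y with hudef
    have hu : u ∈ Icc (0 : Fin 2 → ℝ) 1 := by
      rw [Set.mem_Icc]
      constructor <;> (intro i; by_cases hi : i = 0)
      · simpa [hudef, hi] using hx.1
      · simpa [hudef, hi] using hy.1
      · simpa [hudef, hi] using hx.2
      · simpa [hudef, hi] using hy.2
    have hkey := key u hu
    have h0 : u 0 = x := by simp [hudef]
    have h1 : u 1 = y := by simp [hudef]
    rw [h0, h1] at hkey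
    exact hkey
  apply hfx
  rw [LinearMap.pi_apply_eq_sum_univ f x]
  refine Finset.sum_eq_zero fun γ _ => ?_
  have e1 : (fun j : Idx k => if γ = j then (1:ℝ) else 0)
      = (fun γ' : Idx k => if (γ'.1 : Fin (k + 1) × Fin (k + 1)) = γ.1 then 1 else 0) := by
    funext γ'
    by_cases hh : γ = γ'
    · simp [hh]
    · rw [if_neg hh, if_neg fun hcon => hh (Subtype.ext hcon.symm)]
  rw [e1]
  show x γ • cfun γ.1 = 0
  rw [hcall γ.1, smul_zero]

lemma phiPV_zero (k : ℕ) : phiPV k (0 : Fin 2 → ℝ) = 0 := by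
  funext γ
  have := γ.2.1
  have h2 : (γ.1.1 : ℕ) ≠ 0 ∨ (γ.1.2 : ℕ) ≠ 0 := by omega
  show (0 : Fin 2 → ℝ) 0 ^ (γ.1.1 : ℕ) * (0 : Fin 2 → ℝ) 1 ^ (γ.1.2 : ℕ) = 0
  simp only [Pi.zero_apply]
  rcases h2 with h | h
  · rw [zero_pow h, zero_mul]
  · rw [zero_pow h, mul_zero]

lemma hull_ball (k : ℕ) :
    ∃ (p₀ : Idx k → ℝ) (r : ℝ), 0 < r ∧
      Metric.closedBall p₀ r ⊆ convexHull ℝ (phiPV k '' Icc (0 : Fin 2 → ℝ) 1) := by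
  set S := phiPV k '' Icc (0 : Fin 2 → ℝ) 1 with hS
  have h0S : (0 : Idx k → ℝ) ∈ S := by
    rw [hS, ← phiPV_zero k]
    exact Set.mem_image_of_mem _ (by rw [Set.mem_Icc]; exact ⟨le_rfl, fun i => zero_le_one⟩)
  have hvs : vectorSpan ℝ S = ⊤ := by
    rw [eq_top_iff, ← span_top k]
    rw [Submodule.span_le]
    intro s hs
    have := vsub_mem_vectorSpan ℝ hs h0S
    simpa using this
  have haff : affineSpan ℝ S = ⊤ := by
    rw [AffineSubspace.affineSpan_eq_top_iff_vectorSpan_eq_top_of_nonempty ℝ _ _ ⟨0, h0S⟩]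
    exact hvs
  have hconv : Convex ℝ (convexHull ℝ S) := convex_convexHull ℝ S
  have hint : (interior (convexHull ℝ S)).Nonempty := by
    rw [hconv.interior_nonempty_iff_affineSpan_eq_top, affineSpan_convexHull]
    exact haff
  obtain ⟨p₀, hp₀⟩ := hint
  obtain ⟨ε, hε, hball⟩ := Metric.isOpen_iff.1 isOpen_interior p₀ hp₀
  refine ⟨p₀, ε / 2, by linarith, ?_⟩
  intro z hz
  have : z ∈ Metric.ball p₀ ε := lt_of_le_of_lt (Metric.mem_closedBall.1 hz) (by linarith)
  exact interior_subset (hball this)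

-- chunk 7
lemma descFactorial_le_factorial (n m : ℕ) : n.descFactorial m ≤ n.factorial := by
  rcases le_or_gt m n with h | h
  · exact Nat.le_of_dvd n.factorial_pos
      ⟨(n - m).factorial, by rw [← Nat.factorial_mul_descFactorial h]; ring⟩
  · rw [Nat.descFactorial_eq_zero_iff_lt.2 h]
    exact Nat.zero_le _

lemma Dphi_bound (k : ℕ) (b : Fin 2 → ℕ) (u : Fin 2 → ℝ)
    (hu : u ∈ Icc (0 : Fin 2 → ℝ) 1) :
    ‖DphiPV k b u‖ ≤ ((k.factorial : ℝ)) ^ 2 := by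
  rw [pi_norm_le_iff_of_nonneg (by positivity)]
  intro γ
  rw [Real.norm_eq_abs]
  have hu0 : ∀ i, 0 ≤ u i := fun i => by simpa using hu.1 i
  have hu1 : ∀ i, u i ≤ 1 := fun i => by simpa using hu.2 i
  unfold DphiPV
  split_ifs with h
  · have hγ1 : (γ.1.1 : ℕ) ≤ k := by omega
    have hγ2 : (γ.1.2 : ℕ) ≤ k := by have := γ.2.2; omega
    have hd1 : ((γ.1.1 : ℕ).descFactorial (b 0) : ℝ) ≤ (k.factorial : ℝ) := by
      have h1 : (γ.1.1 : ℕ).descFactorial (b 0) ≤ k.factorial :=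
        le_trans (descFactorial_le_factorial _ _) (Nat.factorial_le (by omega))
      exact_mod_cast h1
    have hd2 : ((γ.1.2 : ℕ).descFactorial (b 1) : ℝ) ≤ (k.factorial : ℝ) := by
      have h1 : (γ.1.2 : ℕ).descFactorial (b 1) ≤ k.factorial :=
        le_trans (descFactorial_le_factorial _ _) (Nat.factorial_le hγ2)
      exact_mod_cast h1
    have hp1 : u 0 ^ ((γ.1.1 : ℕ) - b 0) ≤ 1 := pow_le_one₀ (hu0 0) (hu1 0)
    have hp2 : u 1 ^ ((γ.1.2 : ℕ) - b 1) ≤ 1 := pow_le_one₀ (hu0 1) (hu1 1)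
    rw [abs_of_nonneg (mul_nonneg (mul_nonneg (mul_nonneg (by positivity) (by positivity))
      (pow_nonneg (hu0 0) _)) (pow_nonneg (hu0 1) _))]
    calc ((γ.1.1 : ℕ).descFactorial (b 0) : ℝ) * ((γ.1.2 : ℕ).descFactorial (b 1) : ℝ) *
          u 0 ^ ((γ.1.1 : ℕ) - b 0) * u 1 ^ ((γ.1.2 : ℕ) - b 1)
        ≤ (k.factorial : ℝ) * (k.factorial : ℝ) * 1 * 1 :=
          mul_le_mul (mul_le_mul (mul_le_mul hd1 hd2 (by positivity) (by positivity)) hp1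
            (pow_nonneg (hu0 0) _) (by positivity)) hp2 (pow_nonneg (hu0 1) _) (by positivity)
      _ = ((k.factorial : ℝ)) ^ 2 := by ring
  · simp only [abs_zero]
    positivity

def Tmap (k : ℕ) (a : Fin 2 → ℝ) (d : ℝ) : (Idx k → ℝ) →ᵃ[ℝ] (Idx k → ℝ) where
  toFun := fun x => phiPV k a + Lmap k a d x
  linear := Lmap k a d
  map_vadd' := by
    intro p v
    simp only [map_add, vadd_eq_add]
    abel

lemma shift_image (a : Fin 2 → ℝ) (d : ℝ) (hd : 0 < d) :
    (fun u : Fin 2 → ℝ => fun i => a i + d * u i) '' Icc 0 1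
      = Icc a (fun i => a i + d) := by
  ext x
  constructor
  · rintro ⟨u, hu, rfl⟩
    rw [Set.mem_Icc] at hu ⊢
    have hu0 : ∀ i, 0 ≤ u i := fun i => by simpa using hu.1 i
    have hu1 : ∀ i, u i ≤ 1 := fun i => by simpa using hu.2 i
    constructor <;> intro i
    · have := mul_nonneg hd.le (hu0 i)
      simp only []
      linarith
    · have := mul_le_of_le_one_right hd.le (hu1 i)
      simp only []
      linarith
  · intro hx
    rw [Set.mem_Icc] at hx
    have hx1 : ∀ i, a i ≤ x i := fun i => hx.1 i
    have hx2 : ∀ i, x i ≤ a i + d := fun i => hx.2 i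
    refine ⟨fun i => (x i - a i) / d, ?_, ?_⟩
    · rw [Set.mem_Icc]
      constructor <;> intro i
      · simp only [Pi.zero_apply]
        exact div_nonneg (by linarith [hx1 i]) hd.le
      · simp only [Pi.one_apply]
        rw [div_le_one hd]
        have := hx2 i
        linarith
    · funext i
      field_simp
      ring


/-- Lemma 5.1 (tangent lines in the convex hull of a cap): for every `k ≥ 1` there is
`c_k > 0` such that for every `δ ∈ (0,1]`, every axis-parallel closed square
`Δ ⊆ [0,1]²` of side `δ`, every `ξ ∈ Δ` and every multi-index `b` with `1 ≤ |b| ≤ k`,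
the closed convex hull of `φ_k(Δ)` contains a segment `{p + t ∂^b φ_k(ξ) : t ∈ [0, c_k δ^{|b|}]}`. -/
theorem tangent_segment_in_hull (k : ℕ) (hk : 1 ≤ k) :
    ∃ c : ℝ, 0 < c ∧
      ∀ δ : ℝ, 0 < δ → δ ≤ 1 → ∀ a : Fin 2 → ℝ,
        Icc a (fun i => a i + δ) ⊆ Icc (0 : Fin 2 → ℝ) 1 →
        ∀ ξ ∈ Icc a (fun i => a i + δ), ∀ b : Fin 2 → ℕ,
          1 ≤ b 0 + b 1 → b 0 + b 1 ≤ k →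
          ∃ p : Idx k → ℝ, ∀ t ∈ Icc (0 : ℝ) (c * δ ^ (b 0 + b 1)),
            p + t • DphiPV k b ξ ∈
              closure (convexHull ℝ (phiPV k '' Icc a (fun i => a i + δ))) := by
  obtain ⟨p₀, r, hr, hball⟩ := hull_ball k
  set M : ℝ := ((k.factorial : ℝ)) ^ 2 with hM
  have hM1 : (1 : ℝ) ≤ M := by
    have := k.factorial_pos
    have : (1 : ℝ) ≤ (k.factorial : ℝ) := by exact_mod_cast this
    nlinarith
  have hMpos : 0 < M := by linarith
  refine ⟨r / M, div_pos hr hMpos, ?_⟩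
  intro δ hδ hδ1 a hsub ξ hξ b hb1 hbk
  set m := b 0 + b 1 with hm
  set u₀ : Fin 2 → ℝ := fun i => (ξ i - a i) / δ with hu₀
  have hξmem := hξ
  rw [Set.mem_Icc] at hξmem
  have hu₀mem : u₀ ∈ Icc (0 : Fin 2 → ℝ) 1 := by
    rw [Set.mem_Icc]
    constructor <;> intro i
    · simp only [Pi.zero_apply, hu₀]
      have h1 : a i ≤ ξ i := hξmem.1 i
      exact div_nonneg (by linarith) hδ.le
    · simp only [Pi.one_apply, hu₀]
      rw [div_le_one hδ]
      have h2 : ξ i ≤ a i + δ := hξmem.2 i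
      linarith
  have hξeq : (fun i => a i + δ * u₀ i) = ξ := by
    funext i
    simp only [hu₀]
    field_simp
    ring
  set p : Idx k → ℝ := phiPV k a + Lmap k a δ p₀ with hp
  refine ⟨p, fun t ht => ?_⟩
  obtain ⟨ht0, htc⟩ := ht
  have hδm : (0 : ℝ) < δ ^ m := pow_pos hδ m
  set s : ℝ := t / δ ^ m with hs
  have hs0 : 0 ≤ s := div_nonneg ht0 hδm.le
  have hsc : s ≤ r / M := by
    rw [hs, div_le_iff₀ hδm]
    calc t ≤ r / M * δ ^ m := htc
      _ = r / M * δ ^ m := rfl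
  -- q ∈ closedBall p₀ r
  set q : Idx k → ℝ := p₀ + s • DphiPV k b u₀ with hq
  have hqball : q ∈ Metric.closedBall p₀ r := by
    rw [Metric.mem_closedBall, dist_eq_norm, hq, add_sub_cancel_left, norm_smul,
      Real.norm_eq_abs, abs_of_nonneg hs0]
    calc s * ‖DphiPV k b u₀‖ ≤ (r / M) * M :=
        mul_le_mul hsc (Dphi_bound k b u₀ hu₀mem) (norm_nonneg _) (by positivity)
      _ = r := by field_simp
  have hqhull : q ∈ convexHull ℝ (phiPV k '' Icc (0 : Fin 2 → ℝ) 1) := hball hqball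
  -- image of hull under Tmap
  have himg : Tmap k a δ '' convexHull ℝ (phiPV k '' Icc (0 : Fin 2 → ℝ) 1)
      = convexHull ℝ (phiPV k '' Icc a (fun i => a i + δ)) := by
    rw [AffineMap.image_convexHull]
    congr 1
    rw [← Set.image_comp]
    have hcomp : (Tmap k a δ) ∘ (phiPV k) = fun u => phiPV k (fun i => a i + δ * u i) := by
      funext u
      exact T_phi k a δ u
    rw [hcomp]
    rw [show (fun u : Fin 2 → ℝ => phiPV k (fun i => a i + δ * u i))
        = (phiPV k) ∘ (fun u : Fin 2 → ℝ => fun i => a i + δ * u i) from rfl]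
    rw [Set.image_comp, shift_image a δ hδ]
  have hTq : Tmap k a δ q = p + t • DphiPV k b ξ := by
    show phiPV k a + Lmap k a δ q = p + t • DphiPV k b ξ
    rw [hq, map_add, _root_.map_smul, L_Dphi k a δ b hb1 u₀, hξeq, smul_smul,
      div_mul_cancel₀ t hδm.ne', hp]
    abel
  have hmem : Tmap k a δ q ∈ Tmap k a δ '' convexHull ℝ (phiPV k '' Icc (0 : Fin 2 → ℝ) 1) :=
    Set.mem_image_of_mem _ hqhull
  rw [himg] at hmem
  rw [← hTq]
  exact subset_closure hmem
end
end

section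
/- For every integer k ≥ 2 and every ε ∈ (0, 1] there exist a constant c > 0 and λ₀ ≥ 1 such that for every λ ≥ λ₀, every θ ∈ [0, 1/100] and every w ∈ [1/4, 3/4], the set Ω(θ, w; λ, ε) is Lebesgue measurable and |Ω(θ, w; λ, ε)| ≥ c · λ^{k(k+1)(k+2)/6}. -/
open MeasureTheory Real Set
open scoped ENNReal

noncomputable section

/-- The phase polynomial `P(ξ; x) = ∑_{1 ≤ |β| ≤ k} x_β ξ₁^{β₁} ξ₂^{β₂}`. -/
def Pphase (k : ℕ) (x : Idx k → ℝ) (ξ : Fin 2 → ℝ) : ℝ :=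
  ∑ β : Idx k, x β * ξ 0 ^ (β.1.1 : ℕ) * ξ 1 ^ (β.1.2 : ℕ)

/-- `E_k1(x) = ∫_{[0,1]²} e(P(ξ; x)) dξ` with `e(t) = exp(2πit)`. -/
def Eone (k : ℕ) (x : Idx k → ℝ) : ℂ :=
  ∫ ξ in Icc (0 : Fin 2 → ℝ) 1, Complex.exp (2 * Real.pi * Complex.I * (Pphase k x ξ))

/-- The index `β = (k, 0)`, so that `x₁ = x_{(k,0)}` is the coefficient of `ξ₁^k`. -/
def idxTop (k : ℕ) (hk : 1 ≤ k) : Idx k :=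
  ⟨(⟨k, Nat.lt_succ_self k⟩, ⟨0, Nat.succ_pos k⟩), by constructor <;> simp [hk]⟩

/-- `γ_{k′}(·; x, θ, w)`: the coefficient of `u^{k′}` in the polynomial
`u ↦ P(u − θξ₂ + w, ξ₂; x)`, as a polynomial in `ξ₂` (of degree ≤ k − k′);
equivalently, `P(ξ₁, ξ₂; x) = Σ_{k′=0}^{k} γ_{k′}(ξ₂; x, θ, w) (ξ₁ + θξ₂ − w)^{k′}`.
We work in `ℝ[S][U]`, with `U` the outer variable (standing for `ξ₁ + θξ₂ − w`)
and `S` the inner one (standing for `ξ₂`). -/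
def gam (k : ℕ) (x : Idx k → ℝ) (θ w : ℝ) (k' : ℕ) : Polynomial ℝ :=
  Polynomial.coeff
    (∑ β : Idx k, Polynomial.C (Polynomial.C (x β)) *
      (Polynomial.X - Polynomial.C (Polynomial.C θ * Polynomial.X - Polynomial.C w))
          ^ (β.1.1 : ℕ) *
      Polynomial.C (Polynomial.X ^ (β.1.2 : ℕ)))
    k'

/-- `‖γ‖`, the sum of the absolute values of the coefficients of a real polynomial. -/
def norm1 (γ : Polynomial ℝ) : ℝ := ∑ i ∈ γ.support, |γ.coeff i|

/-- The set `Ω(θ, w; λ, ε)` of (6.4):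
`{x : λ^k ≤ x₁ ≤ (2λ)^k, ‖γ_{k′}(·;x,θ,w)‖ ≤ ε λ^{k′} (1 ≤ k′ ≤ k−1),`
`‖γ₀(·;x,θ,w) − γ₀(0;x,θ,w)‖ ≤ ε}`. -/
def Omegaset (k : ℕ) (hk : 1 ≤ k) (θ w lam ε : ℝ) : Set (Idx k → ℝ) :=
  {x | lam ^ k ≤ x (idxTop k hk) ∧ x (idxTop k hk) ≤ (2 * lam) ^ k ∧
    (∀ k' : ℕ, 1 ≤ k' → k' ≤ k - 1 → norm1 (gam k x θ w k') ≤ ε * lam ^ k') ∧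
    norm1 (gam k x θ w 0 -
      Polynomial.C (Polynomial.eval 0 (gam k x θ w 0))) ≤ ε}

/-! The coefficients of `γ_{k'}(·; x, θ, w)` at `ξ₂^j`, indexed by `(k', j)` like the coordinates
`x_β`, depend linearly on `x` through a matrix that is unitriangular for the lexicographic order
on indices, so this change of variables preserves Lebesgue measure. In the new coordinates `Ω`
contains a box whose side in direction `(k', j)` has length `≍ λ^{k'}`; its volume is
`≍ λ^{∑ k'}`, and the sum of `k'` over the index set is `k(k+1)(k+2)/6`. -/

open Polynomial Matrix

instance (k : ℕ) : DecidableEq (Idx k) := by unfold Idx; infer_instance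

theorem norm1_eq_sum_of_support_subset {γ : ℝ[X]} {s : Finset ℕ} (hs : γ.support ⊆ s) :
    norm1 γ = ∑ j ∈ s, |γ.coeff j| :=
  Finset.sum_subset hs fun j _ hj => by rw [notMem_support_iff.1 hj, abs_zero]

theorem norm1_le_card_mul {γ : ℝ[X]} {s : Finset ℕ} {b : ℝ} (hs : γ.support ⊆ s)
    (hb : ∀ j ∈ s, |γ.coeff j| ≤ b) : norm1 γ ≤ s.card * b := by
  rw [norm1_eq_sum_of_support_subset hs]
  exact (Finset.sum_le_sum hb).trans_eq (by simp)

theorem Measurable.norm1 {α : Type*} [MeasurableSpace α] {f : α → ℝ[X]} {n : ℕ}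
    (hdeg : ∀ a, (f a).natDegree ≤ n) (hf : ∀ j, Measurable fun a => (f a).coeff j) :
    Measurable fun a => norm1 (f a) := by
  have hsupp (a : α) : (f a).support ⊆ Finset.range (n + 1) :=
    supp_subset_range_natDegree_succ.trans (Finset.range_subset_range.2 (Nat.succ_le_succ (hdeg a)))
  simp_rw [fun a => norm1_eq_sum_of_support_subset (hsupp a)]
  fun_prop

theorem volume_preimage_mulVec_of_det_eq_one {ι : Type*} [Fintype ι] [DecidableEq ι]
    {M : Matrix ι ι ℝ} (hM : M.det = 1) (s : Set (ι → ℝ)) :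
    volume ((M *ᵥ ·) ⁻¹' s) = volume s := by
  have hdet : LinearMap.det (toLin' M) = 1 := by rw [LinearMap.det_toLin', hM]
  have h := Measure.addHaar_preimage_linearMap volume (f := toLin' M) (by simp [hdet]) s
  rwa [hdet, inv_one, abs_one, ENNReal.ofReal_one, one_mul] at h

theorem six_mul_sum_range_mul_sub (n : ℕ) :
    6 * ∑ a ∈ Finset.range (n + 1), a * (n + 1 - a) = n * (n + 1) * (n + 2) := by
  induction n with
  | zero => simp
  | succ n ih =>
    have hshift : ∑ a ∈ Finset.range (n + 1), a * (n + 2 - a) =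
        ∑ a ∈ Finset.range (n + 1), a * (n + 1 - a) + ∑ a ∈ Finset.range (n + 1), a := by
      rw [← Finset.sum_add_distrib]
      refine Finset.sum_congr rfl fun a ha => ?_
      rw [show n + 2 - a = n + 1 - a + 1 by simp at ha; omega, Nat.mul_succ]
    have hgauss := Finset.sum_range_id_mul_two (n + 1)
    rw [Finset.sum_range_succ, hshift, Nat.add_sub_cancel_left]
    simp only [Nat.add_sub_cancel] at hgauss
    nlinarith

theorem sum_fin_ite_one_le_add_le (k a : ℕ) :
    ∑ b : Fin (k + 1), (if 1 ≤ a + b ∧ a + b ≤ k then a else 0) = a * (k + 1 - a) := by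
  rcases Nat.eq_zero_or_pos a with rfl | ha
  · simp
  rw [Fin.sum_univ_eq_sum_range (fun b => if 1 ≤ a + b ∧ a + b ≤ k then a else 0),
    ← Finset.sum_filter]
  have : (Finset.range (k + 1)).filter (fun b => 1 ≤ a + b ∧ a + b ≤ k) =
      Finset.range (k + 1 - a) := by
    ext b
    simp only [Finset.mem_filter, Finset.mem_range]
    omega
  rw [this, Finset.sum_const, Finset.card_range, smul_eq_mul, mul_comm]

theorem sum_idx_fst (k : ℕ) : ∑ α : Idx k, (α.1.1 : ℕ) = k * (k + 1) * (k + 2) / 6 := by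
  have hsub : ∑ α : Idx k, (α.1.1 : ℕ) = ∑ p : Fin (k + 1) × Fin (k + 1),
      if 1 ≤ (p.1 : ℕ) + p.2 ∧ (p.1 : ℕ) + p.2 ≤ k then (p.1 : ℕ) else 0 := by
    rw [← Finset.sum_filter]
    exact (Finset.sum_subtype _ (by simp)
      fun p : Fin (k + 1) × Fin (k + 1) => (p.1 : ℕ)).symm
  rw [hsub, Fintype.sum_prod_type]
  simp only [sum_fin_ite_one_le_add_le]
  rw [Fin.sum_univ_eq_sum_range (fun a => a * (k + 1 - a))]
  have := six_mul_sum_range_mul_sub k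
  omega

section GamEntry

variable (θ w : ℝ)

/-- The coefficient of `u^a₁ ξ₂^a₂` in `(u - θξ₂ + w)^b₁ ξ₂^b₂`. -/
def gamEntry (a₁ a₂ b₁ b₂ : ℕ) : ℝ :=
  (((X - C (C θ * X - C w) : ℝ[X][X]) ^ b₁ * C (X ^ b₂)).coeff a₁).coeff a₂

theorem gamEntry_eq (a₁ a₂ b₁ b₂ : ℕ) :
    gamEntry θ w a₁ a₂ b₁ b₂ =
      (if b₂ ≤ a₂ then ((C w - C θ * X : ℝ[X]) ^ (b₁ - a₁)).coeff (a₂ - b₂) else 0) *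
        b₁.choose a₁ := by
  have : (X - C (C θ * X - C w) : ℝ[X][X]) = X + C (C w - C θ * X) := by
    rw [map_sub, map_sub]; ring
  rw [gamEntry, this, coeff_mul_C, coeff_X_add_C_pow, mul_right_comm, coeff_mul_natCast,
    coeff_mul_X_pow']

theorem gamEntry_self (b₁ b₂ : ℕ) : gamEntry θ w b₁ b₂ b₁ b₂ = 1 := by
  simp [gamEntry_eq]

theorem gamEntry_eq_zero_of_lt_fst {a₁ b₁ : ℕ} (h : b₁ < a₁) (a₂ b₂ : ℕ) :
    gamEntry θ w a₁ a₂ b₁ b₂ = 0 := by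
  simp [gamEntry_eq, Nat.choose_eq_zero_of_lt h]

theorem gamEntry_eq_zero_of_ne_snd (a₁ : ℕ) {a₂ b₂ : ℕ} (h : a₂ ≠ b₂) :
    gamEntry θ w a₁ a₂ a₁ b₂ = 0 := by
  rw [gamEntry_eq, Nat.sub_self, pow_zero, coeff_one]
  split_ifs
  · exact absurd (by omega) h
  all_goals simp

theorem gamEntry_eq_zero_of_add_lt {a₁ a₂ b₁ b₂ : ℕ} (h : b₁ + b₂ < a₁ + a₂) :
    gamEntry θ w a₁ a₂ b₁ b₂ = 0 := by
  rcases lt_or_ge b₁ a₁ with h₁ | h₁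
  · exact gamEntry_eq_zero_of_lt_fst θ w h₁ a₂ b₂
  have hdeg : ((C w - C θ * X : ℝ[X]) ^ (b₁ - a₁)).natDegree < a₂ - b₂ := by
    have : (C w - C θ * X : ℝ[X]).natDegree ≤ 1 := by compute_degree
    exact (natDegree_pow_le_of_le _ this).trans_lt (by omega)
  rw [gamEntry_eq, coeff_eq_zero_of_natDegree_lt hdeg]
  simp

end GamEntry

theorem gam_coeff (k : ℕ) (x : Idx k → ℝ) (θ w : ℝ) (k' j : ℕ) :
    (gam k x θ w k').coeff j = ∑ β : Idx k, gamEntry θ w k' j β.1.1 β.1.2 * x β := by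
  simp only [gam, gamEntry, finsetSum_coeff, mul_assoc, coeff_C_mul]
  exact Finset.sum_congr rfl fun β _ => mul_comm _ _

theorem gam_coeff_eq_zero (k : ℕ) (x : Idx k → ℝ) (θ w : ℝ) {k' j : ℕ} (h : k < k' + j) :
    (gam k x θ w k').coeff j = 0 := by
  rw [gam_coeff]
  refine Finset.sum_eq_zero fun β _ => ?_
  rw [gamEntry_eq_zero_of_add_lt θ w (by have := β.2.2; omega), zero_mul]

theorem natDegree_gam_le (k : ℕ) (x : Idx k → ℝ) (θ w : ℝ) (k' : ℕ) :
    (gam k x θ w k').natDegree ≤ k :=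
  natDegree_le_iff_coeff_eq_zero.2 fun j hj => gam_coeff_eq_zero k x θ w (by omega)

def gamMatrix (k : ℕ) (θ w : ℝ) : Matrix (Idx k) (Idx k) ℝ :=
  Matrix.of fun α β => gamEntry θ w α.1.1 α.1.2 β.1.1 β.1.2

theorem gamMatrix_mulVec (k : ℕ) (θ w : ℝ) (x : Idx k → ℝ) (α : Idx k) :
    (gamMatrix k θ w *ᵥ x) α = (gam k x θ w α.1.1).coeff α.1.2 :=
  (gam_coeff k x θ w _ _).symm

theorem det_gamMatrix (k : ℕ) (θ w : ℝ) : (gamMatrix k θ w).det = 1 := by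
  let _ : LinearOrder (Idx k) := LinearOrder.lift' (fun β => toLex ((β.1.1 : ℕ), (β.1.2 : ℕ)))
    fun a b h => by
      simp only [toLex_inj, Prod.mk.injEq] at h
      exact Subtype.ext (Prod.ext (Fin.ext h.1) (Fin.ext h.2))
  rw [Matrix.det_of_isUpperTriangular]
  · exact Finset.prod_eq_one fun α _ => gamEntry_self θ w _ _
  · intro α β (hlt : toLex ((β.1.1 : ℕ), (β.1.2 : ℕ)) < toLex ((α.1.1 : ℕ), (α.1.2 : ℕ)))
    rcases Prod.Lex.toLex_lt_toLex.1 hlt with h | ⟨h, h'⟩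
    · exact gamEntry_eq_zero_of_lt_fst θ w h _ _
    · dsimp only at h h'
      simp only [gamMatrix, Matrix.of_apply, h]
      exact gamEntry_eq_zero_of_ne_snd θ w _ h'.ne'

theorem measurable_gam_coeff (k : ℕ) (θ w : ℝ) (k' j : ℕ) :
    Measurable fun x : Idx k → ℝ => (gam k x θ w k').coeff j := by
  simp_rw [gam_coeff]
  fun_prop

theorem measurableSet_Omegaset (k : ℕ) (hk : 1 ≤ k) (θ w lam ε : ℝ) :
    MeasurableSet (Omegaset k hk θ w lam ε) := by
  have hγ (k' : ℕ) : Measurable fun x : Idx k → ℝ => norm1 (gam k x θ w k') :=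
    Measurable.norm1 (natDegree_gam_le k · θ w k') (measurable_gam_coeff k θ w k')
  have hγ₀ : Measurable fun x : Idx k → ℝ =>
      norm1 (gam k x θ w 0 - C ((gam k x θ w 0).eval 0)) := by
    refine Measurable.norm1 (fun x => natDegree_sub_C.trans_le (natDegree_gam_le k x θ w 0))
      fun j => ?_
    simp_rw [coeff_sub, coeff_C, ← coeff_zero_eq_eval_zero]
    refine (measurable_gam_coeff k θ w 0 j).sub ?_
    split_ifs
    exacts [measurable_gam_coeff k θ w 0 0, measurable_const]
  exact Measurable.setOf <| (measurable_const.le' (measurable_pi_apply _)).and <|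
    ((measurable_pi_apply _).le' measurable_const).and <|
      (Measurable.forall fun k' => measurable_const.imp <| measurable_const.imp <|
        (hγ k').le' measurable_const).and (hγ₀.le' measurable_const)

theorem gamMatrix_mulVec_idxTop (k : ℕ) (hk : 1 ≤ k) (θ w : ℝ) (x : Idx k → ℝ) :
    (gamMatrix k θ w *ᵥ x) (idxTop k hk) = x (idxTop k hk) := by
  rw [gamMatrix_mulVec, gam_coeff, Finset.sum_eq_single (idxTop k hk)]
  · exact (congrArg (· * _) (gamEntry_self θ w k 0)).trans (one_mul _)
  · intro β _ hβ
    have hβ₁ : (β.1.1 : ℕ) < k := by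
      by_contra! h
      refine hβ (Subtype.ext (Prod.ext (Fin.ext ?_) (Fin.ext ?_))) <;>
        simp only [idxTop] <;> have := β.2.2 <;> omega
    exact mul_eq_zero_of_left (gamEntry_eq_zero_of_lt_fst θ w hβ₁ _ _) _
  · simp

section OmegaBox

variable (k : ℕ) (hk : 1 ≤ k)

def omegaBoxLower (lam ε : ℝ) : Idx k → ℝ := fun α =>
  if α = idxTop k hk then lam ^ k else -(ε * lam ^ (α.1.1 : ℕ) / (k + 1))

def omegaBoxUpper (lam ε : ℝ) : Idx k → ℝ := fun α =>
  if α = idxTop k hk then (2 * lam) ^ k else ε * lam ^ (α.1.1 : ℕ) / (k + 1)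

def omegaBoxScale (ε : ℝ) : Idx k → ℝ := fun α =>
  if α = idxTop k hk then 2 ^ k - 1 else 2 * ε / (k + 1)

theorem omegaBoxScale_pos {ε : ℝ} (hε : 0 < ε) (α : Idx k) : 0 < omegaBoxScale k hk ε α := by
  unfold omegaBoxScale
  split_ifs
  · linarith [one_lt_pow₀ (one_lt_two : (1 : ℝ) < 2) (by omega : k ≠ 0)]
  · positivity

theorem omegaBoxUpper_sub_omegaBoxLower (lam ε : ℝ) (α : Idx k) :
    omegaBoxUpper k hk lam ε α - omegaBoxLower k hk lam ε α =
      omegaBoxScale k hk ε α * lam ^ (α.1.1 : ℕ) := by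
  unfold omegaBoxUpper omegaBoxLower omegaBoxScale
  split_ifs with h
  · subst h; simp only [idxTop]; ring
  · ring

theorem volume_omegaBox {lam ε : ℝ} (hlam : 0 ≤ lam) (hε : 0 < ε) :
    volume (Icc (omegaBoxLower k hk lam ε) (omegaBoxUpper k hk lam ε)) =
      ENNReal.ofReal ((∏ α, omegaBoxScale k hk ε α) * lam ^ (k * (k + 1) * (k + 2) / 6)) := by
  simp_rw [Real.volume_Icc_pi, omegaBoxUpper_sub_omegaBoxLower]
  rw [← ENNReal.ofReal_prod_of_nonneg fun α _ =>
      mul_nonneg (omegaBoxScale_pos k hk hε α).le (pow_nonneg hlam _),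
    Finset.prod_mul_distrib, Finset.prod_pow_eq_pow_sum, sum_idx_fst]

theorem abs_gam_coeff_le_of_mulVec_mem_omegaBox {lam ε : ℝ} (hlam : 0 ≤ lam) (hε : 0 ≤ ε)
    {θ w : ℝ} {x : Idx k → ℝ}
    (hx : gamMatrix k θ w *ᵥ x ∈ Icc (omegaBoxLower k hk lam ε) (omegaBoxUpper k hk lam ε))
    (k' j : ℕ) (hk' : k' < k) (hj : 1 ≤ k' + j) :
    |(gam k x θ w k').coeff j| ≤ ε * lam ^ k' / (k + 1) := by
  rcases le_or_gt (k' + j) k with hle | hgt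
  · let α : Idx k := ⟨(⟨k', by omega⟩, ⟨j, by omega⟩), hj, hle⟩
    have hα : α ≠ idxTop k hk := fun h => hk'.ne (congrArg (fun β : Idx k => (β.1.1 : ℕ)) h)
    have hlo := hx.1 α
    have hhi := hx.2 α
    simp only [gamMatrix_mulVec, omegaBoxLower, omegaBoxUpper, if_neg hα] at hlo hhi
    exact abs_le.2 ⟨by linarith, hhi⟩
  · rw [gam_coeff_eq_zero k x θ w hgt, abs_zero]
    positivity

theorem preimage_omegaBox_subset_Omegaset {lam ε : ℝ} (hlam : 0 ≤ lam) (hε : 0 ≤ ε) (θ w : ℝ) :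
    (gamMatrix k θ w *ᵥ ·) ⁻¹' Icc (omegaBoxLower k hk lam ε) (omegaBoxUpper k hk lam ε) ⊆
      Omegaset k hk θ w lam ε := by
  intro x hx
  have hbound := abs_gam_coeff_le_of_mulVec_mem_omegaBox k hk hlam hε hx
  have hlo := hx.1 (idxTop k hk)
  have hhi := hx.2 (idxTop k hk)
  simp only [gamMatrix_mulVec_idxTop, omegaBoxLower, omegaBoxUpper, if_pos] at hlo hhi
  refine ⟨hlo, hhi, fun k' hk'₁ hk'₂ => ?_, ?_⟩
  · calc norm1 (gam k x θ w k')
        ≤ (Finset.range (k + 1)).card * (ε * lam ^ k' / (k + 1)) :=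
          norm1_le_card_mul ((supp_subset_range_natDegree_succ).trans
            (Finset.range_subset_range.2 (by linarith [natDegree_gam_le k x θ w k'])))
            fun j _ => hbound k' j (by omega) (by omega)
      _ = ε * lam ^ k' := by rw [Finset.card_range]; push_cast; field_simp
  · calc norm1 (gam k x θ w 0 - C ((gam k x θ w 0).eval 0))
        ≤ (Finset.Icc 1 k).card * (ε / (k + 1)) := by
          refine norm1_le_card_mul (fun j hj => ?_) fun j hj => ?_
          · have hj0 : j ≠ 0 := by
              rintro rfl
              simp [coeff_zero_eq_eval_zero] at hj
            have := (le_natDegree_of_mem_supp j hj).trans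
              (natDegree_sub_C.trans_le (natDegree_gam_le k x θ w 0))
            simp only [Finset.mem_Icc]
            omega
          · simp only [Finset.mem_Icc] at hj
            simpa [coeff_C, show j ≠ 0 by omega] using
              hbound 0 j (by omega) (by omega)
      _ ≤ ε := by
          rw [Nat.card_Icc, Nat.add_sub_cancel, mul_div_assoc', div_le_iff₀ (by positivity)]
          nlinarith

end OmegaBox

theorem Omega_measure_lower_bound_general (k : ℕ) (hk : 2 ≤ k) (ε : ℝ) (hε : 0 < ε) :
    ∃ c : ℝ, 0 < c ∧ ∃ lam₀ : ℝ, 1 ≤ lam₀ ∧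
      ∀ lam : ℝ, lam₀ ≤ lam →
        ∀ θ ∈ Icc (0 : ℝ) (1 / 100), ∀ w ∈ Icc (1 / 4 : ℝ) (3 / 4),
          MeasurableSet (Omegaset k (le_trans one_le_two hk) θ w lam ε) ∧
          ENNReal.ofReal (c * lam ^ (k * (k + 1) * (k + 2) / 6)) ≤
            volume (Omegaset k (le_trans one_le_two hk) θ w lam ε) := by
  have hk₁ : 1 ≤ k := le_trans one_le_two hk
  refine ⟨∏ α, omegaBoxScale k hk₁ ε α, Finset.prod_pos fun α _ => omegaBoxScale_pos k hk₁ hε α,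
    1, le_rfl, fun lam hlam θ _ w _ => ⟨measurableSet_Omegaset k _ θ w lam ε, ?_⟩⟩
  have hlam₀ : 0 ≤ lam := zero_le_one.trans hlam
  calc ENNReal.ofReal ((∏ α, omegaBoxScale k hk₁ ε α) * lam ^ (k * (k + 1) * (k + 2) / 6))
      = volume (Icc (omegaBoxLower k hk₁ lam ε) (omegaBoxUpper k hk₁ lam ε)) :=
        (volume_omegaBox k hk₁ hlam₀ hε).symm
    _ = volume ((gamMatrix k θ w *ᵥ ·) ⁻¹'
          Icc (omegaBoxLower k hk₁ lam ε) (omegaBoxUpper k hk₁ lam ε)) :=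
        (volume_preimage_mulVec_of_det_eq_one (det_gamMatrix k θ w) _).symm
    _ ≤ volume (Omegaset k hk₁ θ w lam ε) :=
        measure_mono (preimage_omegaBox_subset_Omegaset k hk₁ hlam₀ hε.le θ w)

/-- Part of Lemma 6.1: for every `k ≥ 2` and `ε ∈ (0,1]` there are `c > 0` and
`λ₀ ≥ 1` such that for every `λ ≥ λ₀`, `θ ∈ [0, 1/100]` and `w ∈ [1/4, 3/4]`,
the set `Ω(θ, w; λ, ε)` is measurable with `|Ω(θ, w; λ, ε)| ≥ c λ^{k(k+1)(k+2)/6}`. -/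
theorem Omega_measure_lower_bound (k : ℕ) (hk : 2 ≤ k) (ε : ℝ) (hε : 0 < ε) (hε1 : ε ≤ 1) :
    ∃ c : ℝ, 0 < c ∧ ∃ lam₀ : ℝ, 1 ≤ lam₀ ∧
      ∀ lam : ℝ, lam₀ ≤ lam →
        ∀ θ ∈ Icc (0 : ℝ) (1 / 100), ∀ w ∈ Icc (1 / 4 : ℝ) (3 / 4),
          MeasurableSet (Omegaset k (le_trans one_le_two hk) θ w lam ε) ∧
          ENNReal.ofReal (c * lam ^ (k * (k + 1) * (k + 2) / 6)) ≤
            volume (Omegaset k (le_trans one_le_two hk) θ w lam ε) :=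
  Omega_measure_lower_bound_general k hk ε hε
end
end

section
/- For every integer k ≥ 2 there exist ε₀ > 0 and λ₀ ≥ 1 such that the following holds: for every 0 < ε ≤ ε₀ and every integer λ ≥ λ₀, setting θ_r := r/(100λ) and w_{r′} := 1/4 + r′/(2λ) for r, r′ ∈ {0, 1, …, λ}, if (r₁, r₁′) and (r₂, r₂′) are distinct elements of {0,…,λ}², then Ω(θ_{r₁}, w_{r₁′}; λ, ε) ∩ Ω(θ_{r₂}, w_{r₂′}; λ, ε) = ∅. -/
open MeasureTheory Real Set
open scoped ENNReal

noncomputable section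

open Polynomial in
lemma gam_sub (k : ℕ) (hk : 2 ≤ k) (x : Idx k → ℝ) (θ₁ w₁ θ₂ w₂ : ℝ) :
    gam k x θ₁ w₁ (k - 1) - gam k x θ₂ w₂ (k - 1) =
      Polynomial.C (x (idxTop k (le_trans one_le_two hk)) * k) *
        (Polynomial.C (w₁ - w₂) + Polynomial.C (θ₂ - θ₁) * Polynomial.X) := by
  unfold gam
  rw [Polynomial.finset_sum_coeff, Polynomial.finset_sum_coeff, ← Finset.sum_sub_distrib]
  rw [Finset.sum_eq_single_of_mem (idxTop k (le_trans one_le_two hk)) (Finset.mem_univ _)]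
  · simp only [idxTop, sub_eq_add_neg, ← Polynomial.C_neg, Polynomial.coeff_mul_C,
      Polynomial.coeff_C_mul, Polynomial.coeff_X_add_C_pow]
    have h1 : k - (k - 1) = 1 := by omega
    have h2 : Nat.choose k (k - 1) = k := by
      have h3 := Nat.choose_symm (show k - 1 ≤ k by omega)
      rw [h1] at h3
      rw [← h3, Nat.choose_one_right]
    rw [h1, h2]
    simp only [pow_one, pow_zero, mul_one, map_mul, map_sub, map_add, map_neg,
      Polynomial.C_eq_natCast]
    ring
  · intro β _ hβ
    obtain ⟨⟨⟨b1, hb1⟩, ⟨b2, hb2⟩⟩, hc1, hc2⟩ := β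
    simp only [sub_eq_add_neg, ← Polynomial.C_neg, Polynomial.coeff_mul_C,
      Polynomial.coeff_C_mul, Polynomial.coeff_X_add_C_pow]
    by_cases hb : b1 = k
    · exfalso
      apply hβ
      have hb20 : b2 = 0 := by simp at hc2; omega
      apply Subtype.ext
      simp [idxTop, Prod.ext_iff, Fin.ext_iff, hb, hb20]
    · have he : b1 - (k - 1) = 0 := by simp at hc2; omega
      simp only [he, pow_zero, one_mul]
      ring

lemma abs_coeff_le_norm1 (p : Polynomial ℝ) (i : ℕ) : |p.coeff i| ≤ norm1 p := by
  by_cases h : p.coeff i = 0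
  · rw [h, abs_zero]; exact Finset.sum_nonneg fun j _ => abs_nonneg _
  · exact Finset.single_le_sum (f := fun j => |p.coeff j|) (fun j _ => abs_nonneg _)
      (Polynomial.mem_support_iff.mpr h)

lemma key_contra (k : ℕ) (hk : 2 ≤ k) (L x₁ ε d c : ℝ) (hL : 1 ≤ L)
    (hx : L ^ k ≤ x₁) (hε' : ε ≤ 1/200) (hc : 0 < c) (hc' : c ≤ 100)
    (hd : 1/(c*L) ≤ |d|) (hb : |x₁ * k * d| ≤ 2 * ε * L ^ (k-1)) : False := by
  have hL0 : (0:ℝ) < L := lt_of_lt_of_le one_pos hL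
  have hM : (1:ℝ) ≤ L ^ (k-1) := one_le_pow₀ hL
  have hM0 : (0:ℝ) < L ^ (k-1) := by positivity
  have hx0 : 0 < x₁ := lt_of_lt_of_le (pow_pos hL0 k) hx
  have hkR : (2:ℝ) ≤ (k:ℝ) := by exact_mod_cast hk
  have hLk : L ^ k = L ^ (k-1) * L := by rw [← pow_succ]; congr 1; omega
  have h1 : (L^(k-1) * L) * (k:ℝ) * (1/(c*L)) ≤ |x₁ * (k:ℝ) * d| := by
    rw [abs_mul, abs_mul, abs_of_nonneg hx0.le, abs_of_nonneg (Nat.cast_nonneg k)]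
    gcongr
    rw [← hLk]; exact hx
  have h2 : (L^(k-1) * L) * (k:ℝ) * (1/(c*L)) = L^(k-1) * k / c := by
    field_simp
  have h3 : L^(k-1) * (k:ℝ) / c ≤ 2*ε*L^(k-1) := by
    rw [← h2]; exact h1.trans hb
  rw [div_le_iff₀ hc] at h3
  have hεc : ε * c ≤ 1/2 := by nlinarith
  nlinarith [mul_le_mul_of_nonneg_left hεc hM0.le, mul_le_mul_of_nonneg_left hkR hM0.le]

lemma one_le_abs_nat_sub {a b : ℕ} (h : a ≠ b) : (1:ℝ) ≤ |(a:ℝ) - (b:ℝ)| := by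
  have h' : (a:ℤ) - (b:ℤ) ≠ 0 := sub_ne_zero.mpr (by exact_mod_cast h)
  have := Int.one_le_abs h'
  have h2 : ((|(a:ℤ) - (b:ℤ)| : ℤ) : ℝ) = |(a:ℝ) - (b:ℝ)| := by push_cast; rfl
  rw [← h2]; exact_mod_cast this

/-- Disjointness part of Lemma 6.1: for every `k ≥ 2` there exist `ε₀ > 0` and
`λ₀ ≥ 1` such that for every `0 < ε ≤ ε₀` and every integer `λ ≥ λ₀`, setting
`θ_r = r/(100λ)` and `w_{r′} = 1/4 + r′/(2λ)` for `r, r′ ∈ {0,…,λ}`, the sets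
`Ω(θ_r, w_{r′}; λ, ε)` for distinct pairs `(r, r′)` are pairwise disjoint. -/
theorem Omega_pairwise_disjoint (k : ℕ) (hk : 2 ≤ k) :
    ∃ ε₀ : ℝ, 0 < ε₀ ∧ ∃ lam₀ : ℕ, 1 ≤ lam₀ ∧
      ∀ ε : ℝ, 0 < ε → ε ≤ ε₀ →
        ∀ lam : ℕ, lam₀ ≤ lam →
          ∀ r₁ r₁' r₂ r₂' : ℕ, r₁ ≤ lam → r₁' ≤ lam → r₂ ≤ lam → r₂' ≤ lam →
            (r₁, r₁') ≠ (r₂, r₂') →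
            Omegaset k (le_trans one_le_two hk)
                ((r₁ : ℝ) / (100 * lam)) (1 / 4 + (r₁' : ℝ) / (2 * lam)) (lam : ℝ) ε ∩
              Omegaset k (le_trans one_le_two hk)
                ((r₂ : ℝ) / (100 * lam)) (1 / 4 + (r₂' : ℝ) / (2 * lam)) (lam : ℝ) ε =
              ∅ := by
  refine ⟨1/200, by norm_num, 1, le_rfl, ?_⟩
  intro ε hε hε₀ lam hlam r₁ r₁' r₂ r₂' hr₁ hr₁' hr₂ hr₂' hne
  rw [Set.eq_empty_iff_forall_notMem]
  rintro x ⟨hxa, hxb⟩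
  obtain ⟨ha1, -, ha3, -⟩ := hxa
  obtain ⟨hb1, -, hb3, -⟩ := hxb
  set L : ℝ := (lam : ℝ) with hLdef
  have hL : (1:ℝ) ≤ L := by rw [hLdef]; exact_mod_cast hlam
  have hL0 : (0:ℝ) < L := lt_of_lt_of_le one_pos hL
  set θ₁ : ℝ := (r₁:ℝ)/(100*L)
  set θ₂ : ℝ := (r₂:ℝ)/(100*L)
  set w₁ : ℝ := 1/4 + (r₁':ℝ)/(2*L)
  set w₂ : ℝ := 1/4 + (r₂':ℝ)/(2*L)
  have hga := ha3 (k-1) (by omega) le_rfl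
  have hgb := hb3 (k-1) (by omega) le_rfl
  have hsub := gam_sub k hk x θ₁ w₁ θ₂ w₂
  set x₁ : ℝ := x (idxTop k (le_trans one_le_two hk)) with hx₁def
  have key : ∀ j : ℕ,
      |(Polynomial.C (x₁ * k) *
        (Polynomial.C (w₁ - w₂) + Polynomial.C (θ₂ - θ₁) * Polynomial.X)).coeff j|
        ≤ 2 * ε * L ^ (k-1) := by
    intro j
    rw [← hsub, Polynomial.coeff_sub]
    calc |(gam k x θ₁ w₁ (k-1)).coeff j - (gam k x θ₂ w₂ (k-1)).coeff j|
        ≤ |(gam k x θ₁ w₁ (k-1)).coeff j| + |(gam k x θ₂ w₂ (k-1)).coeff j| := abs_sub _ _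
      _ ≤ norm1 (gam k x θ₁ w₁ (k-1)) + norm1 (gam k x θ₂ w₂ (k-1)) :=
          add_le_add (abs_coeff_le_norm1 _ _) (abs_coeff_le_norm1 _ _)
      _ ≤ ε * L ^ (k-1) + ε * L ^ (k-1) := add_le_add hga hgb
      _ = 2 * ε * L ^ (k-1) := by ring
  have key0 := key 0
  have key1 := key 1
  have hc0 : (Polynomial.C (x₁ * (k:ℝ)) *
        (Polynomial.C (w₁ - w₂) + Polynomial.C (θ₂ - θ₁) * Polynomial.X)).coeff 0
      = x₁ * (k:ℝ) * (w₁ - w₂) := by simp [mul_assoc]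
  have hc1 : (Polynomial.C (x₁ * (k:ℝ)) *
        (Polynomial.C (w₁ - w₂) + Polynomial.C (θ₂ - θ₁) * Polynomial.X)).coeff 1
      = x₁ * (k:ℝ) * (θ₂ - θ₁) := by simp [mul_assoc]
  rw [hc0] at key0
  rw [hc1] at key1
  by_cases hw : r₁' = r₂'
  · -- then r₁ ≠ r₂, use the θ coefficient
    have hr : r₂ ≠ r₁ := by
      intro hr; exact hne (by rw [hr, hw])
    have hd : 1/(100*L) ≤ |θ₂ - θ₁| := by
      have heq : θ₂ - θ₁ = ((r₂:ℝ) - (r₁:ℝ))/(100*L) := by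
        simp only [θ₁, θ₂]; ring
      rw [heq, abs_div, abs_of_pos (by positivity : (0:ℝ) < 100*L)]
      gcongr
      exact one_le_abs_nat_sub hr
    exact key_contra k hk L x₁ ε (θ₂ - θ₁) 100 hL ha1 hε₀ (by norm_num) le_rfl hd key1
  · -- use the w coefficient
    have hd : 1/(2*L) ≤ |w₁ - w₂| := by
      have heq : w₁ - w₂ = ((r₁':ℝ) - (r₂':ℝ))/(2*L) := by
        simp only [w₁, w₂]; ring
      rw [heq, abs_div, abs_of_pos (by positivity : (0:ℝ) < 2*L)]
      gcongr
      exact one_le_abs_nat_sub hw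
    exact key_contra k hk L x₁ ε (w₁ - w₂) 2 hL ha1 hε₀ (by norm_num) (by norm_num) hd key0
end
end
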